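/- arXiv:1310.6166 — 5 statements merged into one kernel-verified Lean document; each statement's English description precedes it below -/
import Mathlib

section
/- If the linear random dynamical system (θ, Φ) on ℝ^d admits an exponential dichotomy with growth rate γ ∈ ℝ and invariant projector P_γ, then for ℙ-almost every ω ∈ Ω: ker P_γ(ω) = {x ∈ ℝ^d : t ↦ Φ(t, ω)x is γ⁻-exponentially bounded} and range P_γ(ω) = {x ∈ ℝ^d : t ↦ Φ(t, ω)x is γ⁺-exponentially bounded}. -/
open MeasureTheory Filter

noncomputable section

/-- A linear random dynamical system `(θ, Φ)` on `ℝ^d` over the probability space `(Ω, 𝓕, ℙ)`: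
`θ` is a measure-preserving measurable dynamical system on `Ω`, and `Φ` is a measurable
cocycle over `θ` taking values in the invertible continuous linear maps of `ℝ^d`. -/
structure LinRDS {Ω : Type*} [MeasurableSpace Ω] (ℙ : Measure Ω) (d : ℕ) where
  θ : ℝ → Ω → Ω
  Φ : ℝ → Ω → EuclideanSpace ℝ (Fin d) →L[ℝ] EuclideanSpace ℝ (Fin d)
  θ_meas : Measurable fun p : ℝ × Ω => θ p.1 p.2
  θ_zero : ∀ ω, θ 0 ω = ω
  θ_add : ∀ t s ω, θ (t + s) ω = θ t (θ s ω)
  θ_pres : ∀ t, MeasurePreserving (θ t) ℙ ℙ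
  Φ_meas : ∀ x, Measurable fun p : ℝ × Ω => Φ p.1 p.2 x
  Φ_zero : ∀ ω, Φ 0 ω = 1
  Φ_cocycle : ∀ t s ω, Φ (t + s) ω = Φ t (θ s ω) * Φ s ω
  Φ_isUnit : ∀ t ω, IsUnit (Φ t ω)

variable {Ω : Type*} [MeasurableSpace Ω] {ℙ : Measure Ω} {d : ℕ}

/-- The base of the linear random dynamical system is ergodic. -/
def LinRDS.IsErgodic (S : LinRDS ℙ d) : Prop :=
  ∀ A : Set Ω, MeasurableSet A → (∀ t, S.θ t ⁻¹' A = A) → ℙ A = 0 ∨ ℙ A = 1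

/-- An invariant projector of a linear random dynamical system. -/
def LinRDS.InvProjector (S : LinRDS ℙ d)
    (P : Ω → EuclideanSpace ℝ (Fin d) →L[ℝ] EuclideanSpace ℝ (Fin d)) : Prop :=
  (∀ x, Measurable fun ω => P ω x) ∧ (∀ ω, P ω * P ω = P ω) ∧
    ∀ t ω, P (S.θ t ω) * S.Φ t ω = S.Φ t ω * P ω

/-- `(θ, Φ)` admits an exponential dichotomy with growth rate `γ` and invariant projector `P`. -/
def LinRDS.IsED (S : LinRDS ℙ d) (γ : ℝ)
    (P : Ω → EuclideanSpace ℝ (Fin d) →L[ℝ] EuclideanSpace ℝ (Fin d)) : Prop :=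
  S.InvProjector P ∧ ∃ a > (0:ℝ), ∃ K ≥ (1:ℝ), ∀ᵐ ω ∂ℙ,
    (∀ t : ℝ, 0 ≤ t → ‖S.Φ t ω * P ω‖ ≤ K * Real.exp ((γ - a) * t)) ∧
    (∀ t : ℝ, t ≤ 0 → ‖S.Φ t ω * (1 - P ω)‖ ≤ K * Real.exp ((γ + a) * t))

/-- `(θ, Φ)` admits an exponential dichotomy with real growth rate `γ`. -/
def LinRDS.AdmitsED (S : LinRDS ℙ d) (γ : ℝ) : Prop :=
  ∃ P, S.IsED γ P

/-- `(θ, Φ)` admits an exponential dichotomy with extended-real growth rate `γ`; for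
`γ = ±∞` this means an exponential dichotomy with some real growth rate whose projector
is a.s. the identity (resp. a.s. zero). -/
def LinRDS.AdmitsEDE (S : LinRDS ℙ d) (γ : EReal) : Prop :=
  (∃ g : ℝ, γ = (g : EReal) ∧ S.AdmitsED g) ∨
  (γ = ⊤ ∧ ∃ g : ℝ, ∃ P, S.IsED g P ∧ ∀ᵐ ω ∂ℙ, P ω = 1) ∨
  (γ = ⊥ ∧ ∃ g : ℝ, ∃ P, S.IsED g P ∧ ∀ᵐ ω ∂ℙ, P ω = 0)

/-- The dichotomy spectrum of `(θ, Φ)`, a subset of the extended real line. -/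
def LinRDS.spectrum (S : LinRDS ℙ d) : Set EReal :=
  {γ | ¬ S.AdmitsEDE γ}

/-- The rank of a continuous linear map on `ℝ^d`. -/
def clmRank (P : EuclideanSpace ℝ (Fin d) →L[ℝ] EuclideanSpace ℝ (Fin d)) : ℕ :=
  Module.finrank ℝ (LinearMap.range
    (P : EuclideanSpace ℝ (Fin d) →ₗ[ℝ] EuclideanSpace ℝ (Fin d)))

/-! A vector of `range P(ω)` has a `γ⁺`-bounded orbit by the dichotomy estimate. Conversely,
conjugating back along the orbit, `(1 - P(ω)) x = Φ(-n, θ_n ω) (1 - P(θ_n ω)) Φ(n, ω) x`; the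
first factor contracts at rate `γ + a` while the orbit grows at most at rate `γ`, so
`‖(1 - P(ω)) x‖ = O(e^{-an})` and `x ∈ range P(ω)`. This needs the dichotomy estimates at the
countably many points `θ_n ω`, which hold almost surely because each `θ_n` preserves `ℙ`.
The kernel is the same statement for the time-reversed system, which has an exponential
dichotomy with rate `-γ` and projector `1 - P`. -/

open Real

lemma eq_zero_of_forall_norm_le_mul_exp_neg {E : Type*} [NormedAddCommGroup E] {y : E}
    {M a : ℝ} (ha : 0 < a) (h : ∀ n : ℕ, ‖y‖ ≤ M * exp (-(a * n))) : y = 0 := by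
  have hlim : Tendsto (fun n : ℕ => M * exp (-(a * n))) atTop (nhds 0) := by
    simpa using ((tendsto_exp_neg_atTop_nhds_zero.comp
      (tendsto_natCast_atTop_atTop.const_mul_atTop ha)).const_mul M)
  exact norm_le_zero_iff.mp (ge_of_tendsto' hlim h)

namespace LinRDS

variable (S : LinRDS ℙ d) {P Q : Ω → EuclideanSpace ℝ (Fin d) →L[ℝ] EuclideanSpace ℝ (Fin d)}
  {γ : ℝ}

lemma Φ_neg_mul_Φ (t : ℝ) (ω : Ω) : S.Φ (-t) (S.θ t ω) * S.Φ t ω = 1 := by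
  rw [← S.Φ_cocycle, neg_add_cancel, S.Φ_zero]

lemma ae_forall_nat_θ {p : Ω → Prop} (h : ∀ᵐ ω ∂ℙ, p ω) :
    ∀ᵐ ω ∂ℙ, ∀ n : ℕ, p (S.θ n ω) :=
  ae_all_iff.mpr fun n => (S.θ_pres n).quasiMeasurePreserving.ae h

def reverse : LinRDS ℙ d where
  θ t := S.θ (-t)
  Φ t := S.Φ (-t)
  θ_meas := S.θ_meas.comp (measurable_fst.neg.prodMk measurable_snd)
  θ_zero ω := by rw [neg_zero, S.θ_zero]
  θ_add t s ω := by rw [neg_add, S.θ_add]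
  θ_pres t := S.θ_pres (-t)
  Φ_meas x := (S.Φ_meas x).comp (measurable_fst.neg.prodMk measurable_snd)
  Φ_zero ω := by rw [neg_zero, S.Φ_zero]
  Φ_cocycle t s ω := by rw [neg_add, S.Φ_cocycle]
  Φ_isUnit t := S.Φ_isUnit (-t)

variable {S}

namespace InvProjector

lemma one_sub (hP : S.InvProjector P) : S.InvProjector fun ω => 1 - P ω := by
  obtain ⟨hmeas, hidem, hinv⟩ := hP
  refine ⟨fun x => ?_, fun ω => ?_, fun t ω => ?_⟩
  · simp only [sub_apply, one_apply_eq_self]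
    exact measurable_const.sub (hmeas x)
  · simp only [sub_mul, mul_sub, one_mul, mul_one, hidem, sub_self, sub_zero]
  · simp only [sub_mul, mul_sub, one_mul, mul_one, hinv]

lemma reverse (hP : S.InvProjector P) : S.reverse.InvProjector P :=
  ⟨hP.1, hP.2.1, fun t => hP.2.2 (-t)⟩

lemma isIdempotentElem_toLinearMap (hP : S.InvProjector P) (ω : Ω) :
    IsIdempotentElem (P ω : EuclideanSpace ℝ (Fin d) →ₗ[ℝ] EuclideanSpace ℝ (Fin d)) :=
  ContinuousLinearMap.IsIdempotentElem.toLinearMap (hP.2.1 ω)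

lemma conj_eq (hP : S.InvProjector P) (t : ℝ) (ω : Ω) :
    S.Φ (-t) (S.θ t ω) * P (S.θ t ω) * S.Φ t ω = P ω := by
  rw [mul_assoc, hP.2.2, ← mul_assoc, S.Φ_neg_mul_Φ, one_mul]

lemma apply_eq_zero_of_norm_le {a K C : ℝ} {ω : Ω} {x : EuclideanSpace ℝ (Fin d)}
    (hQ : S.InvProjector Q) (ha : 0 < a)
    (hQ_contr : ∀ n : ℕ, ‖S.Φ (-n) (S.θ n ω) * Q (S.θ n ω)‖ ≤ K * exp ((γ + a) * -n))
    (hx : ∀ t, 0 ≤ t → ‖S.Φ t ω x‖ * exp (-γ * t) ≤ C) :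
    Q ω x = 0 := by
  refine eq_zero_of_forall_norm_le_mul_exp_neg (M := K * C) ha fun n => ?_
  have horbit : ‖S.Φ n ω x‖ ≤ C * exp (γ * n) :=
    calc ‖S.Φ n ω x‖ = ‖S.Φ n ω x‖ * exp (-γ * n) * exp (γ * n) := by
          rw [mul_assoc, ← exp_add, neg_mul, neg_add_cancel, exp_zero, mul_one]
      _ ≤ C * exp (γ * n) := by gcongr; exact hx n n.cast_nonneg
  calc ‖Q ω x‖ = ‖(S.Φ (-n) (S.θ n ω) * Q (S.θ n ω)) (S.Φ n ω x)‖ := by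
        rw [← hQ.conj_eq n ω]; rfl
    _ ≤ ‖S.Φ (-n) (S.θ n ω) * Q (S.θ n ω)‖ * ‖S.Φ n ω x‖ := ContinuousLinearMap.le_opNorm _ _
    _ ≤ K * exp ((γ + a) * -n) * (C * exp (γ * n)) :=
        mul_le_mul (hQ_contr n) horbit (norm_nonneg _) ((norm_nonneg _).trans (hQ_contr n))
    _ = K * C * exp (-(a * n)) := by
        rw [show -(a * n) = (γ + a) * -n + γ * n by ring, exp_add]; ring

end InvProjector

lemma norm_apply_mul_exp_le {a K : ℝ} {ω : Ω} {x : EuclideanSpace ℝ (Fin d)}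
    (ha : 0 ≤ a) (hK : 0 ≤ K) (hx : P ω x = x)
    (hP_contr : ∀ t, 0 ≤ t → ‖S.Φ t ω * P ω‖ ≤ K * exp ((γ - a) * t)) (t : ℝ) (ht : 0 ≤ t) :
    ‖S.Φ t ω x‖ * exp (-γ * t) ≤ K * ‖x‖ :=
  calc ‖S.Φ t ω x‖ * exp (-γ * t) = ‖(S.Φ t ω * P ω) x‖ * exp (-γ * t) := by
        rw [mul_apply_eq_comp, hx]
    _ ≤ K * exp ((γ - a) * t) * ‖x‖ * exp (-γ * t) := by
        gcongr
        exact (ContinuousLinearMap.le_opNorm _ _).trans (by gcongr; exact hP_contr t ht)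
    _ = K * ‖x‖ * exp (-(a * t)) := by
        rw [show -(a * t) = (γ - a) * t + -γ * t by ring, exp_add]; ring
    _ ≤ K * ‖x‖ := mul_le_of_le_one_right (by positivity) (exp_le_one_iff.mpr (by nlinarith))

namespace IsED

lemma reverse (h : S.IsED γ P) : S.reverse.IsED (-γ) fun ω => 1 - P ω := by
  obtain ⟨hP, a, ha, K, hK, hae⟩ := h
  refine ⟨hP.one_sub.reverse, a, ha, K, hK, hae.mono fun ω hω => ⟨fun t ht => ?_, fun t ht => ?_⟩⟩
  · rw [show (-γ - a) * t = (γ + a) * -t by ring]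
    exact hω.2 (-t) (by linarith)
  · rw [sub_sub_cancel, show (-γ + a) * t = (γ - a) * -t by ring]
    exact hω.1 (-t) (by linarith)

lemma ae_mem_range_iff (h : S.IsED γ P) :
    ∀ᵐ ω ∂ℙ, ∀ x : EuclideanSpace ℝ (Fin d),
      x ∈ LinearMap.range (P ω : EuclideanSpace ℝ (Fin d) →ₗ[ℝ] EuclideanSpace ℝ (Fin d)) ↔
        ∃ C : ℝ, ∀ t : ℝ, 0 ≤ t → ‖S.Φ t ω x‖ * exp (-γ * t) ≤ C := by
  obtain ⟨hP, a, ha, K, hK, hae⟩ := h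
  filter_upwards [hae, S.ae_forall_nat_θ hae] with ω hω hωn x
  rw [LinearMap.IsIdempotentElem.range_eq_ker_one_sub (hP.isIdempotentElem_toLinearMap ω),
    LinearMap.mem_ker]
  constructor
  · intro hx
    have hPx : P ω x = x := (sub_eq_zero.mp hx).symm
    exact ⟨K * ‖x‖, S.norm_apply_mul_exp_le ha.le (by linarith) hPx hω.1⟩
  · rintro ⟨C, hC⟩
    exact hP.one_sub.apply_eq_zero_of_norm_le ha (fun n => (hωn n).2 (-n) (by simp)) hC

lemma ae_mem_ker_iff (h : S.IsED γ P) :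
    ∀ᵐ ω ∂ℙ, ∀ x : EuclideanSpace ℝ (Fin d),
      x ∈ LinearMap.ker (P ω : EuclideanSpace ℝ (Fin d) →ₗ[ℝ] EuclideanSpace ℝ (Fin d)) ↔
        ∃ C : ℝ, ∀ t : ℝ, t ≤ 0 → ‖S.Φ t ω x‖ * exp (-γ * t) ≤ C := by
  filter_upwards [h.reverse.ae_mem_range_iff] with ω hω x
  rw [LinearMap.IsIdempotentElem.ker_eq_range_one_sub (h.1.isIdempotentElem_toLinearMap ω)]
  refine (hω x).trans ⟨fun ⟨C, hC⟩ => ⟨C, fun t ht => ?_⟩, fun ⟨C, hC⟩ => ⟨C, fun t ht => ?_⟩⟩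
  · simpa [LinRDS.reverse] using hC (-t) (by linarith)
  · simpa [LinRDS.reverse] using hC (-t) (by linarith)

end IsED

end LinRDS

theorem ker_range_of_ED_eq_exponentially_bounded_general
    {Ω : Type*} [MeasurableSpace Ω] {ℙ : Measure Ω} {d : ℕ}
    (S : LinRDS ℙ d) (γ : ℝ)
    (P : Ω → EuclideanSpace ℝ (Fin d) →L[ℝ] EuclideanSpace ℝ (Fin d))
    (hED : S.IsED γ P) :
    ∀ᵐ ω ∂ℙ,
      (∀ x : EuclideanSpace ℝ (Fin d),
        x ∈ LinearMap.ker (P ω : EuclideanSpace ℝ (Fin d) →ₗ[ℝ] EuclideanSpace ℝ (Fin d)) ↔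
          ∃ C : ℝ, ∀ t : ℝ, t ≤ 0 → ‖S.Φ t ω x‖ * Real.exp (-γ * t) ≤ C) ∧
      (∀ x : EuclideanSpace ℝ (Fin d),
        x ∈ LinearMap.range (P ω : EuclideanSpace ℝ (Fin d) →ₗ[ℝ] EuclideanSpace ℝ (Fin d)) ↔
          ∃ C : ℝ, ∀ t : ℝ, 0 ≤ t → ‖S.Φ t ω x‖ * Real.exp (-γ * t) ≤ C) :=
  hED.ae_mem_ker_iff.and hED.ae_mem_range_iff

/-- If `(θ, Φ)` admits an exponential dichotomy with growth rate `γ` and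
projector `P_γ`, then almost surely `ker P_γ(ω)` consists exactly of the points `x` whose
orbit `t ↦ Φ(t, ω) x` is `γ⁻`-exponentially bounded, and `range P_γ(ω)` of those whose
orbit is `γ⁺`-exponentially bounded. -/
theorem ker_range_of_ED_eq_exponentially_bounded
    {Ω : Type*} [MeasurableSpace Ω] {ℙ : Measure Ω} [IsProbabilityMeasure ℙ] {d : ℕ}
    (S : LinRDS ℙ d) (γ : ℝ)
    (P : Ω → EuclideanSpace ℝ (Fin d) →L[ℝ] EuclideanSpace ℝ (Fin d))
    (hED : S.IsED γ P) :
    ∀ᵐ ω ∂ℙ,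
      (∀ x : EuclideanSpace ℝ (Fin d),
        x ∈ LinearMap.ker (P ω : EuclideanSpace ℝ (Fin d) →ₗ[ℝ] EuclideanSpace ℝ (Fin d)) ↔
          ∃ C : ℝ, ∀ t : ℝ, t ≤ 0 → ‖S.Φ t ω x‖ * Real.exp (-γ * t) ≤ C) ∧
      (∀ x : EuclideanSpace ℝ (Fin d),
        x ∈ LinearMap.range (P ω : EuclideanSpace ℝ (Fin d) →ₗ[ℝ] EuclideanSpace ℝ (Fin d)) ↔
          ∃ C : ℝ, ∀ t : ℝ, 0 ≤ t → ‖S.Φ t ω x‖ * Real.exp (-γ * t) ≤ C) :=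
  ker_range_of_ED_eq_exponentially_bounded_general S γ P hED

end
end

section
/- Let (θ, Φ) be a linear random dynamical system on ℝ^d with resolvent set ρ, and let γ ∈ ρ ∩ ℝ. Then there exists ε > 0 such that the interval (γ − ε, γ + ε) is contained in ρ, and moreover for every ζ ∈ (γ − ε, γ + ε) and all invariant projectors P_γ and P_ζ of exponential dichotomies of (θ, Φ) with growth rates γ and ζ respectively, one has rank P_ζ(ω) = rank P_γ(ω) for ℙ-almost every ω. In particular, ρ ∩ ℝ is an open subset of ℝ. -/
open MeasureTheory Filter

noncomputable section

variable {Ω : Type*} [MeasurableSpace Ω] {ℙ : Measure Ω} {d : ℕ}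

section Aux

variable {Ω' : Type*} [MeasurableSpace Ω'] {ℙ' : Measure Ω'} {d' : ℕ}

/-- Key lemma: if the orbit of `x` grows slower than `e^{(γ+a)t}` along the natural numbers,
and `P` is an invariant projector whose unstable dichotomy estimate with rate `γ` holds along
the forward orbit of `ω`, then `x` is fixed by `P ω`. -/
lemma LinRDS.fix_of_slow_growth (S : LinRDS ℙ' d') {γ a K : ℝ}
    {P : Ω' → EuclideanSpace ℝ (Fin d') →L[ℝ] EuclideanSpace ℝ (Fin d')}
    (hcomm : ∀ t ω, P (S.θ t ω) * S.Φ t ω = S.Φ t ω * P ω) {ω : Ω'}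
    (hE2 : ∀ n : ℕ, ∀ t : ℝ, t ≤ 0 →
      ‖S.Φ t (S.θ (n : ℝ) ω) * (1 - P (S.θ (n : ℝ) ω))‖ ≤ K * Real.exp ((γ + a) * t))
    {x : EuclideanSpace ℝ (Fin d')} {C c : ℝ} (hc : c < γ + a)
    (hx : ∀ n : ℕ, ‖S.Φ (n : ℝ) ω x‖ ≤ C * Real.exp (c * n)) :
    P ω x = x := by
  have hco : ∀ n : ℕ, S.Φ (-(n : ℝ)) (S.θ (n : ℝ) ω) * S.Φ (n : ℝ) ω = 1 := by
    intro n
    have h := S.Φ_cocycle (-(n : ℝ)) (n : ℝ) ω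
    rw [neg_add_cancel, S.Φ_zero] at h
    exact h.symm
  have hcomm' : ∀ n : ℕ,
      (1 - P (S.θ (n : ℝ) ω)) * S.Φ (n : ℝ) ω = S.Φ (n : ℝ) ω * (1 - P ω) := by
    intro n
    have h := hcomm (n : ℝ) ω
    rw [sub_mul, one_mul, mul_sub, mul_one, h]
  have hop : ∀ n : ℕ,
      S.Φ (-(n : ℝ)) (S.θ (n : ℝ) ω) * (1 - P (S.θ (n : ℝ) ω)) * S.Φ (n : ℝ) ω
        = 1 - P ω := by
    intro n
    rw [mul_assoc, hcomm' n, ← mul_assoc, hco n, one_mul]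
  have hbnd : ∀ n : ℕ, ‖x - P ω x‖ ≤ (K * C) * Real.exp ((c - (γ + a)) * n) := by
    intro n
    have hx' : x - P ω x
        = (S.Φ (-(n : ℝ)) (S.θ (n : ℝ) ω) * (1 - P (S.θ (n : ℝ) ω)))
            (S.Φ (n : ℝ) ω x) := by
      have h0 : x - P ω x
          = ((1 : EuclideanSpace ℝ (Fin d') →L[ℝ] EuclideanSpace ℝ (Fin d')) - P ω) x := by
        simp
      rw [h0, ← hop n]
      simp [ContinuousLinearMap.mul_apply]
    have h1 := hE2 n (-(n : ℝ)) (neg_nonpos.mpr (Nat.cast_nonneg n))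
    have h2 := hx n
    calc ‖x - P ω x‖
        = ‖(S.Φ (-(n : ℝ)) (S.θ (n : ℝ) ω) * (1 - P (S.θ (n : ℝ) ω)))
            (S.Φ (n : ℝ) ω x)‖ := by rw [← hx']
      _ ≤ ‖S.Φ (-(n : ℝ)) (S.θ (n : ℝ) ω) * (1 - P (S.θ (n : ℝ) ω))‖
            * ‖S.Φ (n : ℝ) ω x‖ := ContinuousLinearMap.le_opNorm _ _
      _ ≤ (K * Real.exp ((γ + a) * (-(n : ℝ)))) * (C * Real.exp (c * n)) :=
          mul_le_mul h1 h2 (norm_nonneg _) (le_trans (norm_nonneg _) h1)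
      _ = (K * C) * Real.exp ((c - (γ + a)) * n) := by
          rw [mul_mul_mul_comm, ← Real.exp_add]
          ring_nf
  have htend : Filter.Tendsto (fun n : ℕ => (K * C) * Real.exp ((c - (γ + a)) * n))
      Filter.atTop (nhds 0) := by
    have heq : ∀ n : ℕ, Real.exp ((c - (γ + a)) * n) = (Real.exp (c - (γ + a))) ^ n := by
      intro n
      rw [mul_comm, Real.exp_nat_mul]
    have hlt : Real.exp (c - (γ + a)) < 1 := by
      rw [Real.exp_lt_one_iff]
      linarith
    have h0 : Filter.Tendsto (fun n : ℕ => (Real.exp (c - (γ + a))) ^ n)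
        Filter.atTop (nhds 0) :=
      tendsto_pow_atTop_nhds_zero_of_lt_one (le_of_lt (Real.exp_pos _)) hlt
    have h1 := h0.const_mul (K * C)
    simpa [heq, mul_zero] using h1
  have hle : ‖x - P ω x‖ ≤ 0 :=
    ge_of_tendsto htend (Filter.Eventually.of_forall hbnd)
  have hz : x - P ω x = 0 :=
    norm_eq_zero.mp (le_antisymm hle (norm_nonneg _))
  exact (sub_eq_zero.mp hz).symm

/-- A.e., the dichotomy estimates hold along the whole forward (integer) orbit. -/
lemma LinRDS.ae_orbit_estimates (S : LinRDS ℙ' d') {γ a K : ℝ}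
    {P : Ω' → EuclideanSpace ℝ (Fin d') →L[ℝ] EuclideanSpace ℝ (Fin d')}
    (hae : ∀ᵐ ω ∂ℙ',
      (∀ t : ℝ, 0 ≤ t → ‖S.Φ t ω * P ω‖ ≤ K * Real.exp ((γ - a) * t)) ∧
      (∀ t : ℝ, t ≤ 0 → ‖S.Φ t ω * (1 - P ω)‖ ≤ K * Real.exp ((γ + a) * t))) :
    ∀ᵐ ω ∂ℙ',
      (∀ t : ℝ, 0 ≤ t → ‖S.Φ t ω * P ω‖ ≤ K * Real.exp ((γ - a) * t)) ∧
      (∀ n : ℕ, ∀ t : ℝ, t ≤ 0 →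
        ‖S.Φ t (S.θ (n : ℝ) ω) * (1 - P (S.θ (n : ℝ) ω))‖ ≤ K * Real.exp ((γ + a) * t)) := by
  have h2 : ∀ᵐ ω ∂ℙ', ∀ n : ℕ, ∀ t : ℝ, t ≤ 0 →
      ‖S.Φ t (S.θ (n : ℝ) ω) * (1 - P (S.θ (n : ℝ) ω))‖ ≤ K * Real.exp ((γ + a) * t) := by
    rw [MeasureTheory.ae_all_iff]
    intro n
    exact (S.θ_pres (n : ℝ)).quasiMeasurePreserving.ae (hae.mono fun ω h => h.2)
  filter_upwards [hae, h2] with ω hω1 hω2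
  exact ⟨hω1.1, hω2⟩

/-- Nearby growth rates admit an exponential dichotomy with the same projector. -/
lemma LinRDS.admitsED_nearby (S : LinRDS ℙ' d') {γ a K ζ : ℝ}
    {P : Ω' → EuclideanSpace ℝ (Fin d') →L[ℝ] EuclideanSpace ℝ (Fin d')}
    (hinv : S.InvProjector P) (ha : 0 < a) (hK : 1 ≤ K)
    (hae : ∀ᵐ ω ∂ℙ',
      (∀ t : ℝ, 0 ≤ t → ‖S.Φ t ω * P ω‖ ≤ K * Real.exp ((γ - a) * t)) ∧
      (∀ t : ℝ, t ≤ 0 → ‖S.Φ t ω * (1 - P ω)‖ ≤ K * Real.exp ((γ + a) * t)))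
    (hζ : |ζ - γ| < a) : S.AdmitsED ζ := by
  refine ⟨P, hinv, a - |ζ - γ|, by linarith, K, hK, ?_⟩
  have h1 := neg_abs_le (ζ - γ)
  have h2 := le_abs_self (ζ - γ)
  have hK0 : (0:ℝ) ≤ K := by linarith
  filter_upwards [hae] with ω h
  constructor
  · intro t ht
    refine le_trans (h.1 t ht) ?_
    have hle : (γ - a) * t ≤ (ζ - (a - |ζ - γ|)) * t := by nlinarith
    exact mul_le_mul_of_nonneg_left (Real.exp_le_exp.mpr hle) hK0
  · intro t ht
    refine le_trans (h.2 t ht) ?_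
    have hle : (γ + a) * t ≤ (ζ + (a - |ζ - γ|)) * t := by nlinarith
    exact mul_le_mul_of_nonneg_left (Real.exp_le_exp.mpr hle) hK0

/-- Membership in the range of an idempotent map is being fixed by it. -/
lemma mem_range_idem {R : EuclideanSpace ℝ (Fin d') →L[ℝ] EuclideanSpace ℝ (Fin d')}
    (hR : R * R = R) {x : EuclideanSpace ℝ (Fin d')} :
    x ∈ LinearMap.range ((R : EuclideanSpace ℝ (Fin d') →ₗ[ℝ] EuclideanSpace ℝ (Fin d')))
      ↔ R x = x := by
  constructor
  · rintro ⟨y, rfl⟩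
    calc R ((R : EuclideanSpace ℝ (Fin d') →ₗ[ℝ] EuclideanSpace ℝ (Fin d')) y)
        = (R * R) y := rfl
      _ = R y := by rw [hR]
      _ = _ := rfl
  · intro h
    exact ⟨x, h⟩

/-- Two dichotomy projectors with sufficiently close growth rates have a.e. the same range. -/
lemma LinRDS.range_eq_nearby (S : LinRDS ℙ' d') {γ a K ζ : ℝ}
    {P Q : Ω' → EuclideanSpace ℝ (Fin d') →L[ℝ] EuclideanSpace ℝ (Fin d')}
    (hPinv : S.InvProjector P) (ha : 0 < a)
    (hPae : ∀ᵐ ω ∂ℙ',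
      (∀ t : ℝ, 0 ≤ t → ‖S.Φ t ω * P ω‖ ≤ K * Real.exp ((γ - a) * t)) ∧
      (∀ t : ℝ, t ≤ 0 → ‖S.Φ t ω * (1 - P ω)‖ ≤ K * Real.exp ((γ + a) * t)))
    (hQ : S.IsED ζ Q) (h1 : γ - a < ζ) (h2 : ζ < γ + a) :
    ∀ᵐ ω ∂ℙ', LinearMap.range
        ((Q ω : EuclideanSpace ℝ (Fin d') →ₗ[ℝ] EuclideanSpace ℝ (Fin d')))
      = LinearMap.range
        ((P ω : EuclideanSpace ℝ (Fin d') →ₗ[ℝ] EuclideanSpace ℝ (Fin d'))) := by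
  obtain ⟨hQinv, b, hb, L, hL, hQae⟩ := hQ
  filter_upwards [S.ae_orbit_estimates hPae, S.ae_orbit_estimates hQae] with ω hPω hQω
  ext x
  rw [mem_range_idem (hQinv.2.1 ω), mem_range_idem (hPinv.2.1 ω)]
  have key : ∀ (R : Ω' → EuclideanSpace ℝ (Fin d') →L[ℝ] EuclideanSpace ℝ (Fin d'))
      (δ e M : ℝ), (∀ t : ℝ, 0 ≤ t → ‖S.Φ t ω * R ω‖ ≤ M * Real.exp ((δ - e) * t)) →
      R ω x = x → ∀ n : ℕ, ‖S.Φ (n : ℝ) ω x‖ ≤ (M * ‖x‖) * Real.exp ((δ - e) * n) := by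
    intro R δ e M hest hx n
    have hxe : S.Φ (n : ℝ) ω x = (S.Φ (n : ℝ) ω * R ω) x := by
      rw [ContinuousLinearMap.mul_apply, hx]
    rw [hxe]
    calc ‖(S.Φ (n : ℝ) ω * R ω) x‖
        ≤ ‖S.Φ (n : ℝ) ω * R ω‖ * ‖x‖ := ContinuousLinearMap.le_opNorm _ _
      _ ≤ (M * Real.exp ((δ - e) * n)) * ‖x‖ :=
          mul_le_mul_of_nonneg_right (hest (n : ℝ) (Nat.cast_nonneg n)) (norm_nonneg _)
      _ = (M * ‖x‖) * Real.exp ((δ - e) * n) := by ring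
  constructor
  · intro hx
    exact S.fix_of_slow_growth hPinv.2.2 hPω.2 (C := L * ‖x‖) (c := ζ - b)
      (by linarith) (key Q ζ b L hQω.1 hx)
  · intro hx
    exact S.fix_of_slow_growth hQinv.2.2 hQω.2 (C := K * ‖x‖) (c := γ - a)
      (by linarith) (key P γ a K hPω.1 hx)

end Aux

/-- If `γ ∈ ρ ∩ ℝ` (i.e. `(θ, Φ)` admits an exponential dichotomy with real
growth rate `γ`), then there is `ε > 0` such that `(γ - ε, γ + ε) ⊆ ρ` and the ranks of all
projectors of exponential dichotomies with growth rates in this interval agree almost surely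
with the rank of any projector for growth rate `γ`. In particular `ρ ∩ ℝ` is open. -/
theorem resolvent_real_isOpen
    {Ω : Type*} [MeasurableSpace Ω] {ℙ : Measure Ω} [IsProbabilityMeasure ℙ] {d : ℕ}
    (S : LinRDS ℙ d) (γ : ℝ) (hγ : S.AdmitsED γ) :
    (∃ ε > (0:ℝ), (∀ ζ : ℝ, |ζ - γ| < ε → S.AdmitsED ζ) ∧
      ∀ ζ : ℝ, |ζ - γ| < ε →
        ∀ (Pγ Pζ : Ω → EuclideanSpace ℝ (Fin d) →L[ℝ] EuclideanSpace ℝ (Fin d)),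
          S.IsED γ Pγ → S.IsED ζ Pζ →
            ∀ᵐ ω ∂ℙ, clmRank (Pζ ω) = clmRank (Pγ ω)) ∧
    IsOpen {g : ℝ | S.AdmitsED g} := by
  obtain ⟨P, hPinv, a, ha, K, hK, hae⟩ := hγ
  constructor
  · refine ⟨a, ha, fun ζ hζ => S.admitsED_nearby hPinv ha hK hae hζ, ?_⟩
    intro ζ hζ Pγ Pζ hPγ hPζ
    have h1 : γ - a < ζ := by
      have := neg_abs_le (ζ - γ)
      linarith
    have h2 : ζ < γ + a := by
      have := le_abs_self (ζ - γ)
      linarith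
    have hγγ1 : γ - a < γ := by linarith
    have hγγ2 : γ < γ + a := by linarith
    have hrζ := S.range_eq_nearby hPinv ha hae hPζ h1 h2
    have hrγ := S.range_eq_nearby hPinv ha hae hPγ hγγ1 hγγ2
    filter_upwards [hrζ, hrγ] with ω e1 e2
    unfold clmRank
    rw [e1, e2]
  · rw [Metric.isOpen_iff]
    intro g hg
    obtain ⟨P', hP'inv, a', ha', K', hK', hae'⟩ := hg
    refine ⟨a', ha', fun ζ hζ => ?_⟩
    rw [Metric.mem_ball, Real.dist_eq] at hζ
    exact S.admitsED_nearby hP'inv ha' hK' hae' hζ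


end
end

section
/- Let (θ, Φ) be an ergodic linear random dynamical system on ℝ^d with resolvent set ρ, let γ₁, γ₂ ∈ ρ ∩ ℝ with γ₁ < γ₂, and choose invariant projectors P_{γ₁} and P_{γ₂} of exponential dichotomies of (θ, Φ) with growth rates γ₁ and γ₂ respectively (so their ranks rk P_{γ₁}, rk P_{γ₂} are almost surely constant). Then rk P_{γ₁} ≤ rk P_{γ₂}, and the closed interval [γ₁, γ₂] is contained in ρ if and only if rk P_{γ₁} = rk P_{γ₂}. -/
open MeasureTheory Filter

noncomputable section

variable {Ω : Type*} [MeasurableSpace Ω] {ℙ : Measure Ω} {d : ℕ}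

namespace RDSAux

/-- vectors with forward (rational-time) growth at most `e^{γ t}`. -/
def fwdSub (S : LinRDS ℙ d) (γ : ℝ) (ω : Ω) : Submodule ℝ (EuclideanSpace ℝ (Fin d)) where
  carrier := {x | ∃ C : ℝ, ∀ q : ℚ, (0:ℚ) ≤ q → ‖S.Φ (q:ℝ) ω x‖ ≤ C * Real.exp (γ * q)}
  add_mem' := by
    rintro x y ⟨C, hC⟩ ⟨D, hD⟩
    refine ⟨C + D, fun q hq => ?_⟩
    calc ‖S.Φ (q:ℝ) ω (x + y)‖ ≤ ‖S.Φ (q:ℝ) ω x‖ + ‖S.Φ (q:ℝ) ω y‖ := by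
          rw [map_add]; exact norm_add_le _ _
      _ ≤ C * Real.exp (γ * q) + D * Real.exp (γ * q) := add_le_add (hC q hq) (hD q hq)
      _ = (C + D) * Real.exp (γ * q) := by ring
  zero_mem' := ⟨0, fun q hq => by simp⟩
  smul_mem' := by
    rintro c x ⟨C, hC⟩
    refine ⟨‖c‖ * C, fun q hq => ?_⟩
    rw [_root_.map_smul, norm_smul, mul_assoc]
    exact mul_le_mul_of_nonneg_left (hC q hq) (norm_nonneg c)

/-- vectors with backward (rational-time) growth at most `e^{γ t}`. -/
def bwdSub (S : LinRDS ℙ d) (γ : ℝ) (ω : Ω) : Submodule ℝ (EuclideanSpace ℝ (Fin d)) where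
  carrier := {x | ∃ C : ℝ, ∀ q : ℚ, q ≤ (0:ℚ) → ‖S.Φ (q:ℝ) ω x‖ ≤ C * Real.exp (γ * q)}
  add_mem' := by
    rintro x y ⟨C, hC⟩ ⟨D, hD⟩
    refine ⟨C + D, fun q hq => ?_⟩
    calc ‖S.Φ (q:ℝ) ω (x + y)‖ ≤ ‖S.Φ (q:ℝ) ω x‖ + ‖S.Φ (q:ℝ) ω y‖ := by
          rw [map_add]; exact norm_add_le _ _
      _ ≤ C * Real.exp (γ * q) + D * Real.exp (γ * q) := add_le_add (hC q hq) (hD q hq)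
      _ = (C + D) * Real.exp (γ * q) := by ring
  zero_mem' := ⟨0, fun q hq => by simp⟩
  smul_mem' := by
    rintro c x ⟨C, hC⟩
    refine ⟨‖c‖ * C, fun q hq => ?_⟩
    rw [_root_.map_smul, norm_smul, mul_assoc]
    exact mul_le_mul_of_nonneg_left (hC q hq) (norm_nonneg c)

lemma C_nonneg_fwd {S : LinRDS ℙ d} {γ : ℝ} {ω : Ω} {x : EuclideanSpace ℝ (Fin d)} {C : ℝ}
    (hC : ∀ q : ℚ, (0:ℚ) ≤ q → ‖S.Φ (q:ℝ) ω x‖ ≤ C * Real.exp (γ * q)) : ‖x‖ ≤ C := by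
  have := hC 0 le_rfl
  simpa [S.Φ_zero] using this

lemma C_nonneg_bwd {S : LinRDS ℙ d} {γ : ℝ} {ω : Ω} {x : EuclideanSpace ℝ (Fin d)} {C : ℝ}
    (hC : ∀ q : ℚ, q ≤ (0:ℚ) → ‖S.Φ (q:ℝ) ω x‖ ≤ C * Real.exp (γ * q)) : ‖x‖ ≤ C := by
  have := hC 0 le_rfl
  simpa [S.Φ_zero] using this

lemma fwdSub_mono (S : LinRDS ℙ d) (ω : Ω) {γ γ' : ℝ} (h : γ ≤ γ') :
    fwdSub S γ ω ≤ fwdSub S γ' ω := by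
  rintro x ⟨C, hC⟩
  have hC0 : 0 ≤ C := le_trans (norm_nonneg x) (C_nonneg_fwd hC)
  refine ⟨C, fun q hq => ?_⟩
  refine le_trans (hC q hq) (mul_le_mul_of_nonneg_left (Real.exp_le_exp.mpr ?_) hC0)
  have hq' : (0:ℝ) ≤ (q:ℝ) := by exact_mod_cast hq
  exact mul_le_mul_of_nonneg_right h hq'

lemma bwdSub_anti (S : LinRDS ℙ d) (ω : Ω) {γ γ' : ℝ} (h : γ ≤ γ') :
    bwdSub S γ' ω ≤ bwdSub S γ ω := by
  rintro x ⟨C, hC⟩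
  have hC0 : 0 ≤ C := le_trans (norm_nonneg x) (C_nonneg_bwd hC)
  refine ⟨C, fun q hq => ?_⟩
  refine le_trans (hC q hq) (mul_le_mul_of_nonneg_left (Real.exp_le_exp.mpr ?_) hC0)
  have hq' : (q:ℝ) ≤ 0 := by exact_mod_cast hq
  exact mul_le_mul_of_nonpos_right h hq'

/-- `ω` is good for the dichotomy data if the dichotomy estimates hold along all
rational shifts of `ω`. -/
def Good (S : LinRDS ℙ d) (γ a K : ℝ)
    (P : Ω → EuclideanSpace ℝ (Fin d) →L[ℝ] EuclideanSpace ℝ (Fin d)) (ω : Ω) : Prop :=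
  ∀ q : ℚ,
    (∀ t : ℝ, 0 ≤ t →
      ‖S.Φ t (S.θ (q:ℝ) ω) * P (S.θ (q:ℝ) ω)‖ ≤ K * Real.exp ((γ - a) * t)) ∧
    (∀ t : ℝ, t ≤ 0 →
      ‖S.Φ t (S.θ (q:ℝ) ω) * (1 - P (S.θ (q:ℝ) ω))‖ ≤ K * Real.exp ((γ + a) * t))

lemma Good.base {S : LinRDS ℙ d} {γ a K : ℝ} {P} {ω : Ω} (h : Good S γ a K P ω) :
    (∀ t : ℝ, 0 ≤ t → ‖S.Φ t ω * P ω‖ ≤ K * Real.exp ((γ - a) * t)) ∧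
    (∀ t : ℝ, t ≤ 0 → ‖S.Φ t ω * (1 - P ω)‖ ≤ K * Real.exp ((γ + a) * t)) := by
  have h0 := h 0
  rw [show ((0:ℚ):ℝ) = 0 from Rat.cast_zero, S.θ_zero] at h0
  exact h0

lemma ae_good (S : LinRDS ℙ d) {γ a K : ℝ} {P}
    (hae : ∀ᵐ ω ∂ℙ,
      (∀ t : ℝ, 0 ≤ t → ‖S.Φ t ω * P ω‖ ≤ K * Real.exp ((γ - a) * t)) ∧
      (∀ t : ℝ, t ≤ 0 → ‖S.Φ t ω * (1 - P ω)‖ ≤ K * Real.exp ((γ + a) * t))) :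
    ∀ᵐ ω ∂ℙ, Good S γ a K P ω := by
  rw [show (fun ω => Good S γ a K P ω) = fun ω => ∀ q : ℚ, _ from rfl]
  refine ae_all_iff.mpr fun q => ?_
  exact ((S.θ_pres (q:ℝ)).quasiMeasurePreserving.tendsto_ae).eventually hae

end RDSAux

lemma no_exp_decay_lb {B c z : ℝ} (hB : 0 ≤ B) (hc : c < 0) (hz : 0 < z)
    (h : ∀ n : ℕ, z ≤ B * Real.exp (c * n)) : False := by
  have hB1 : (0:ℝ) < B + 1 := by linarith
  obtain ⟨n, hn⟩ := exists_nat_gt (Real.log (z / (B + 1)) / c)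
  have hc' : c ≠ 0 := ne_of_lt hc
  have hcn : c * n < Real.log (z / (B + 1)) := by
    have h2 := mul_lt_mul_of_neg_left hn hc
    rw [mul_comm c (Real.log (z / (B + 1)) / c), div_mul_cancel₀ _ hc'] at h2
    exact h2
  have hlt : Real.exp (c * n) < z / (B + 1) := by
    calc Real.exp (c * n) < Real.exp (Real.log (z / (B + 1))) := Real.exp_lt_exp.mpr hcn
      _ = z / (B + 1) := Real.exp_log (by positivity)
  have h3 : Real.exp (c * n) * (B + 1) < z := (lt_div_iff₀ hB1).mp hlt
  have h4 := h n
  nlinarith [Real.exp_pos (c * n)]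

lemma RDSAux.range_eq (S : LinRDS ℙ d) {γ a K : ℝ}
    {P : Ω → EuclideanSpace ℝ (Fin d) →L[ℝ] EuclideanSpace ℝ (Fin d)}
    (hProj : ∀ ω, P ω * P ω = P ω)
    (hInv : ∀ t ω, P (S.θ t ω) * S.Φ t ω = S.Φ t ω * P ω)
    (ha : 0 < a) (hK : 1 ≤ K) {ω : Ω} (hω : RDSAux.Good S γ a K P ω)
    {γ' : ℝ} (h1 : γ - a ≤ γ') (h2 : γ' < γ + a) :
    LinearMap.range ((P ω : EuclideanSpace ℝ (Fin d) →ₗ[ℝ] EuclideanSpace ℝ (Fin d)))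
      = RDSAux.fwdSub S γ' ω := by
  have hK0 : (0:ℝ) ≤ K := le_trans zero_le_one hK
  apply le_antisymm
  · rintro x ⟨y, rfl⟩
    simp only [ContinuousLinearMap.coe_coe]
    set x := P ω y with hx
    have hfix : P ω x = x := by
      have := congrArg (fun f => f y) (hProj ω)
      simpa [ContinuousLinearMap.mul_apply] using this
    refine ⟨K * ‖x‖, fun q hq => ?_⟩
    have hq' : (0:ℝ) ≤ (q:ℝ) := by exact_mod_cast hq
    calc ‖S.Φ (q:ℝ) ω x‖ = ‖(S.Φ (q:ℝ) ω * P ω) x‖ := by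
            rw [ContinuousLinearMap.mul_apply, hfix]
      _ ≤ ‖S.Φ (q:ℝ) ω * P ω‖ * ‖x‖ := ContinuousLinearMap.le_opNorm _ _
      _ ≤ (K * Real.exp ((γ - a) * q)) * ‖x‖ :=
            mul_le_mul_of_nonneg_right ((hω.base).1 (q:ℝ) hq') (norm_nonneg _)
      _ = K * ‖x‖ * Real.exp ((γ - a) * q) := by ring
      _ ≤ K * ‖x‖ * Real.exp (γ' * q) :=
            mul_le_mul_of_nonneg_left
              (Real.exp_le_exp.mpr (mul_le_mul_of_nonneg_right h1 hq'))
              (mul_nonneg hK0 (norm_nonneg _))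
  · rintro x ⟨C, hC⟩
    have hCx : ‖x‖ ≤ C := RDSAux.C_nonneg_fwd hC
    have hC0 : 0 ≤ C := le_trans (norm_nonneg x) hCx
    suffices hzz : x - P ω x = 0 by
      refine ⟨x, ?_⟩
      have := sub_eq_zero.mp hzz
      simpa using this.symm
    by_contra hzne
    set z := x - P ω x with hzdef
    have hzpos : 0 < ‖z‖ := norm_pos_iff.mpr hzne
    have hPz : P ω z = 0 := by
      have hpp := congrArg (fun f => f x) (hProj ω)
      simp only [ContinuousLinearMap.mul_apply] at hpp
      simp [hzdef, map_sub, hpp]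
    have key : ∀ n : ℕ, ‖z‖ ≤ (K * (C + K * ‖x‖)) * Real.exp ((γ' - (γ + a)) * n) := by
      intro n
      set q : ℚ := (n : ℚ) with hqdef
      have hqr : ((q:ℝ)) = (n:ℝ) := by push_cast [hqdef]; ring
      have hq0 : (0:ℚ) ≤ q := by positivity
      have hq0' : (0:ℝ) ≤ (q:ℝ) := by exact_mod_cast hq0
      -- the evolved vector stays in the unstable directions
      have hfix : (1 - P (S.θ (q:ℝ) ω)) (S.Φ (q:ℝ) ω z) = S.Φ (q:ℝ) ω z := by
        have h1' : P (S.θ (q:ℝ) ω) (S.Φ (q:ℝ) ω z) = S.Φ (q:ℝ) ω (P ω z) := by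
          have := congrArg (fun f => f z) (hInv (q:ℝ) ω)
          simpa [ContinuousLinearMap.mul_apply] using this
        simp [ContinuousLinearMap.sub_apply, h1', hPz]
      have hinvL : S.Φ (-(q:ℝ)) (S.θ (q:ℝ) ω) * S.Φ (q:ℝ) ω = 1 := by
        have hco := S.Φ_cocycle (-(q:ℝ)) (q:ℝ) ω
        rw [neg_add_cancel, S.Φ_zero] at hco
        exact hco.symm
      have hid : z = (S.Φ (-(q:ℝ)) (S.θ (q:ℝ) ω) * (1 - P (S.θ (q:ℝ) ω))) (S.Φ (q:ℝ) ω z) := by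
        rw [ContinuousLinearMap.mul_apply, hfix, ← ContinuousLinearMap.mul_apply, hinvL,
          ContinuousLinearMap.one_apply]
      -- upper bound on the evolved vector
      have hub : ‖S.Φ (q:ℝ) ω z‖ ≤ (C + K * ‖x‖) * Real.exp (γ' * q) := by
        have e1 : ‖S.Φ (q:ℝ) ω x‖ ≤ C * Real.exp (γ' * q) := hC q hq0
        have e2 : ‖S.Φ (q:ℝ) ω (P ω x)‖ ≤ K * ‖x‖ * Real.exp (γ' * q) := by
          calc ‖S.Φ (q:ℝ) ω (P ω x)‖ = ‖(S.Φ (q:ℝ) ω * P ω) x‖ := by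
                rw [ContinuousLinearMap.mul_apply]
            _ ≤ ‖S.Φ (q:ℝ) ω * P ω‖ * ‖x‖ := ContinuousLinearMap.le_opNorm _ _
            _ ≤ (K * Real.exp ((γ - a) * q)) * ‖x‖ :=
                  mul_le_mul_of_nonneg_right ((hω.base).1 (q:ℝ) hq0') (norm_nonneg _)
            _ = K * ‖x‖ * Real.exp ((γ - a) * q) := by ring
            _ ≤ K * ‖x‖ * Real.exp (γ' * q) :=
                  mul_le_mul_of_nonneg_left
                    (Real.exp_le_exp.mpr (mul_le_mul_of_nonneg_right h1 hq0'))
                    (mul_nonneg hK0 (norm_nonneg _))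
        calc ‖S.Φ (q:ℝ) ω z‖ = ‖S.Φ (q:ℝ) ω x - S.Φ (q:ℝ) ω (P ω x)‖ := by
              rw [hzdef, map_sub]
          _ ≤ ‖S.Φ (q:ℝ) ω x‖ + ‖S.Φ (q:ℝ) ω (P ω x)‖ := norm_sub_le _ _
          _ ≤ C * Real.exp (γ' * q) + K * ‖x‖ * Real.exp (γ' * q) := add_le_add e1 e2
          _ = (C + K * ‖x‖) * Real.exp (γ' * q) := by ring
      have lb := (hω q).2 (-(q:ℝ)) (neg_nonpos.mpr hq0')
      calc ‖z‖ = ‖(S.Φ (-(q:ℝ)) (S.θ (q:ℝ) ω) * (1 - P (S.θ (q:ℝ) ω))) (S.Φ (q:ℝ) ω z)‖ := by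
            rw [← hid]
        _ ≤ ‖S.Φ (-(q:ℝ)) (S.θ (q:ℝ) ω) * (1 - P (S.θ (q:ℝ) ω))‖ * ‖S.Φ (q:ℝ) ω z‖ :=
            ContinuousLinearMap.le_opNorm _ _
        _ ≤ (K * Real.exp ((γ + a) * (-(q:ℝ)))) * ((C + K * ‖x‖) * Real.exp (γ' * q)) := by
            refine mul_le_mul lb hub (norm_nonneg _) (by positivity)
        _ = (K * (C + K * ‖x‖)) * Real.exp ((γ' - (γ + a)) * n) := by
            rw [← hqr, mul_assoc, mul_comm (Real.exp ((γ + a) * (-(q:ℝ)))),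
              mul_assoc, ← Real.exp_add]
            ring_nf
    refine no_exp_decay_lb ?_ (by linarith) hzpos key
    have : 0 ≤ K * ‖x‖ := mul_nonneg hK0 (norm_nonneg x)
    positivity

lemma RDSAux.ker_eq (S : LinRDS ℙ d) {γ a K : ℝ}
    {P : Ω → EuclideanSpace ℝ (Fin d) →L[ℝ] EuclideanSpace ℝ (Fin d)}
    (hProj : ∀ ω, P ω * P ω = P ω)
    (hInv : ∀ t ω, P (S.θ t ω) * S.Φ t ω = S.Φ t ω * P ω)
    (ha : 0 < a) (hK : 1 ≤ K) {ω : Ω} (hω : RDSAux.Good S γ a K P ω)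
    {γ' : ℝ} (h1 : γ - a < γ') (h2 : γ' ≤ γ + a) :
    LinearMap.ker ((P ω : EuclideanSpace ℝ (Fin d) →ₗ[ℝ] EuclideanSpace ℝ (Fin d)))
      = RDSAux.bwdSub S γ' ω := by
  have hK0 : (0:ℝ) ≤ K := le_trans zero_le_one hK
  apply le_antisymm
  · intro x hx
    have hx0 : P ω x = 0 := by simpa using hx
    refine ⟨K * ‖x‖, fun q hq => ?_⟩
    have hq' : ((q:ℝ)) ≤ 0 := by exact_mod_cast hq
    have hfx : (1 - P ω) x = x := by
      simp [ContinuousLinearMap.sub_apply, hx0]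
    calc ‖S.Φ (q:ℝ) ω x‖ = ‖(S.Φ (q:ℝ) ω * (1 - P ω)) x‖ := by
          rw [ContinuousLinearMap.mul_apply, hfx]
      _ ≤ ‖S.Φ (q:ℝ) ω * (1 - P ω)‖ * ‖x‖ := ContinuousLinearMap.le_opNorm _ _
      _ ≤ (K * Real.exp ((γ + a) * q)) * ‖x‖ :=
            mul_le_mul_of_nonneg_right ((hω.base).2 (q:ℝ) hq') (norm_nonneg _)
      _ = K * ‖x‖ * Real.exp ((γ + a) * q) := by ring
      _ ≤ K * ‖x‖ * Real.exp (γ' * q) :=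
            mul_le_mul_of_nonneg_left
              (Real.exp_le_exp.mpr (mul_le_mul_of_nonpos_right h2 hq'))
              (mul_nonneg hK0 (norm_nonneg _))
  · rintro x ⟨C, hC⟩
    have hCx : ‖x‖ ≤ C := RDSAux.C_nonneg_bwd hC
    have hC0 : 0 ≤ C := le_trans (norm_nonneg x) hCx
    suffices hzz : P ω x = 0 by simpa using hzz
    by_contra hzne
    set z := P ω x with hzdef
    have hzpos : 0 < ‖z‖ := norm_pos_iff.mpr hzne
    have hPz : P ω z = z := by
      have := congrArg (fun f => f x) (hProj ω)
      simpa [ContinuousLinearMap.mul_apply] using this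
    have key : ∀ n : ℕ, ‖z‖ ≤ (K * (C + K * ‖x‖)) * Real.exp ((γ - a - γ') * n) := by
      intro n
      set q : ℚ := -(n : ℚ) with hqdef
      have hqr : ((q:ℝ)) = -(n:ℝ) := by push_cast [hqdef]; ring
      have hq0 : q ≤ (0:ℚ) := by simp [hqdef]
      have hq0' : ((q:ℝ)) ≤ 0 := by exact_mod_cast hq0
      have hfix : P (S.θ (q:ℝ) ω) (S.Φ (q:ℝ) ω z) = S.Φ (q:ℝ) ω z := by
        have h1' : P (S.θ (q:ℝ) ω) (S.Φ (q:ℝ) ω z) = S.Φ (q:ℝ) ω (P ω z) := by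
          have := congrArg (fun f => f z) (hInv (q:ℝ) ω)
          simpa [ContinuousLinearMap.mul_apply] using this
        rw [h1', hPz]
      have hinvL : S.Φ (-(q:ℝ)) (S.θ (q:ℝ) ω) * S.Φ (q:ℝ) ω = 1 := by
        have hco := S.Φ_cocycle (-(q:ℝ)) (q:ℝ) ω
        rw [neg_add_cancel, S.Φ_zero] at hco
        exact hco.symm
      have hid : z = (S.Φ (-(q:ℝ)) (S.θ (q:ℝ) ω) * P (S.θ (q:ℝ) ω)) (S.Φ (q:ℝ) ω z) := by
        rw [ContinuousLinearMap.mul_apply, hfix, ← ContinuousLinearMap.mul_apply, hinvL,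
          ContinuousLinearMap.one_apply]
      have hub : ‖S.Φ (q:ℝ) ω z‖ ≤ (C + K * ‖x‖) * Real.exp (γ' * q) := by
        have e1 : ‖S.Φ (q:ℝ) ω x‖ ≤ C * Real.exp (γ' * q) := hC q hq0
        have e2 : ‖S.Φ (q:ℝ) ω (x - z)‖ ≤ K * ‖x‖ * Real.exp (γ' * q) := by
          have hxz : x - z = (1 - P ω) x := by
            simp [hzdef, ContinuousLinearMap.sub_apply]
          calc ‖S.Φ (q:ℝ) ω (x - z)‖ = ‖(S.Φ (q:ℝ) ω * (1 - P ω)) x‖ := by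
                rw [ContinuousLinearMap.mul_apply, ← hxz]
            _ ≤ ‖S.Φ (q:ℝ) ω * (1 - P ω)‖ * ‖x‖ := ContinuousLinearMap.le_opNorm _ _
            _ ≤ (K * Real.exp ((γ + a) * q)) * ‖x‖ :=
                  mul_le_mul_of_nonneg_right ((hω.base).2 (q:ℝ) hq0') (norm_nonneg _)
            _ = K * ‖x‖ * Real.exp ((γ + a) * q) := by ring
            _ ≤ K * ‖x‖ * Real.exp (γ' * q) :=
                  mul_le_mul_of_nonneg_left
                    (Real.exp_le_exp.mpr (mul_le_mul_of_nonpos_right h2 hq0'))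
                    (mul_nonneg hK0 (norm_nonneg _))
        calc ‖S.Φ (q:ℝ) ω z‖ = ‖S.Φ (q:ℝ) ω x - S.Φ (q:ℝ) ω (x - z)‖ := by
              rw [map_sub]; congr 1; abel
          _ ≤ ‖S.Φ (q:ℝ) ω x‖ + ‖S.Φ (q:ℝ) ω (x - z)‖ := norm_sub_le _ _
          _ ≤ C * Real.exp (γ' * q) + K * ‖x‖ * Real.exp (γ' * q) := add_le_add e1 e2
          _ = (C + K * ‖x‖) * Real.exp (γ' * q) := by ring
      have lb := (hω q).1 (-(q:ℝ)) (neg_nonneg.mpr hq0')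
      calc ‖z‖ = ‖(S.Φ (-(q:ℝ)) (S.θ (q:ℝ) ω) * P (S.θ (q:ℝ) ω)) (S.Φ (q:ℝ) ω z)‖ := by
            rw [← hid]
        _ ≤ ‖S.Φ (-(q:ℝ)) (S.θ (q:ℝ) ω) * P (S.θ (q:ℝ) ω)‖ * ‖S.Φ (q:ℝ) ω z‖ :=
            ContinuousLinearMap.le_opNorm _ _
        _ ≤ (K * Real.exp ((γ - a) * (-(q:ℝ)))) * ((C + K * ‖x‖) * Real.exp (γ' * q)) := by
            refine mul_le_mul lb hub (norm_nonneg _) (by positivity)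
        _ = (K * (C + K * ‖x‖)) * Real.exp ((γ - a - γ') * n) := by
            rw [mul_assoc, mul_comm (Real.exp ((γ - a) * (-(q:ℝ)))),
              mul_assoc, ← Real.exp_add, hqr]
            ring_nf
    refine no_exp_decay_lb ?_ (by linarith) hzpos key
    have : 0 ≤ K * ‖x‖ := mul_nonneg hK0 (norm_nonneg x)
    positivity

lemma RDSAux.projector_ext {p q : EuclideanSpace ℝ (Fin d) →L[ℝ] EuclideanSpace ℝ (Fin d)}
    (hp : p * p = p) (hq : q * q = q)
    (hr : LinearMap.range (p : EuclideanSpace ℝ (Fin d) →ₗ[ℝ] EuclideanSpace ℝ (Fin d))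
        = LinearMap.range (q : EuclideanSpace ℝ (Fin d) →ₗ[ℝ] EuclideanSpace ℝ (Fin d)))
    (hk : LinearMap.ker (p : EuclideanSpace ℝ (Fin d) →ₗ[ℝ] EuclideanSpace ℝ (Fin d))
        = LinearMap.ker (q : EuclideanSpace ℝ (Fin d) →ₗ[ℝ] EuclideanSpace ℝ (Fin d))) :
    p = q := by
  ext x
  have h1 : p (q x) = q x := by
    have hm : q x ∈ LinearMap.range
        (p : EuclideanSpace ℝ (Fin d) →ₗ[ℝ] EuclideanSpace ℝ (Fin d)) := by
      rw [hr]; exact ⟨x, rfl⟩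
    obtain ⟨y, hy⟩ := hm
    simp only [ContinuousLinearMap.coe_coe] at hy
    rw [← hy]
    have := congrArg (fun f => f y) hp
    simpa [ContinuousLinearMap.mul_apply] using this
  have h2 : p (x - q x) = 0 := by
    have hm : x - q x ∈ LinearMap.ker
        (q : EuclideanSpace ℝ (Fin d) →ₗ[ℝ] EuclideanSpace ℝ (Fin d)) := by
      have := congrArg (fun f => f x) hq
      simp only [ContinuousLinearMap.mul_apply] at this
      simp [LinearMap.mem_ker, map_sub, this]
    rw [← hk] at hm
    simpa using hm
  have h3 : p x = p (q x) + p (x - q x) := by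
    rw [← map_add]; congr 1; abel
  rw [h3, h1, h2, add_zero]

/-- For an ergodic linear random dynamical system, if `γ₁ < γ₂` both lie in
the resolvent set with projectors `P₁, P₂` of almost surely constant rank `r₁, r₂`, then
`r₁ ≤ r₂`, and `[γ₁, γ₂]` is contained in the resolvent set if and only if `r₁ = r₂`. -/
theorem rank_monotone_and_interval_resolvent
    {Ω : Type*} [MeasurableSpace Ω] {ℙ : Measure Ω} [IsProbabilityMeasure ℙ] {d : ℕ}
    (S : LinRDS ℙ d) (hErg : S.IsErgodic)
    (γ₁ γ₂ : ℝ) (hγ : γ₁ < γ₂)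
    (P₁ P₂ : Ω → EuclideanSpace ℝ (Fin d) →L[ℝ] EuclideanSpace ℝ (Fin d))
    (hED₁ : S.IsED γ₁ P₁) (hED₂ : S.IsED γ₂ P₂)
    (r₁ r₂ : ℕ)
    (hr₁ : ∀ᵐ ω ∂ℙ, clmRank (P₁ ω) = r₁)
    (hr₂ : ∀ᵐ ω ∂ℙ, clmRank (P₂ ω) = r₂) :
    r₁ ≤ r₂ ∧ ((∀ γ ∈ Set.Icc γ₁ γ₂, S.AdmitsED γ) ↔ r₁ = r₂) := by
  classical
  haveI : (ae ℙ).NeBot := ae_neBot.mpr (IsProbabilityMeasure.ne_zero ℙ)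
  obtain ⟨⟨hM₁, hProj₁, hInv₁⟩, a₁, ha₁, K₁, hK₁, hae₁⟩ := hED₁
  obtain ⟨⟨hM₂, hProj₂, hInv₂⟩, a₂, ha₂, K₂, hK₂, hae₂⟩ := hED₂
  have hGood₁ : ∀ᵐ ω ∂ℙ, RDSAux.Good S γ₁ a₁ K₁ P₁ ω := RDSAux.ae_good S hae₁
  have hGood₂ : ∀ᵐ ω ∂ℙ, RDSAux.Good S γ₂ a₂ K₂ P₂ ω := RDSAux.ae_good S hae₂
  -- rank monotonicity
  have hle : r₁ ≤ r₂ := by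
    obtain ⟨ω, hg1, hg2, e1, e2⟩ := (hGood₁.and (hGood₂.and (hr₁.and hr₂))).exists
    have R1 := RDSAux.range_eq S hProj₁ hInv₁ ha₁ hK₁ hg1 (γ' := γ₁)
      (by linarith) (by linarith)
    have R2 := RDSAux.range_eq S hProj₂ hInv₂ ha₂ hK₂ hg2 (γ' := γ₂)
      (by linarith) (by linarith)
    rw [← e1, ← e2, clmRank, clmRank, R1, R2]
    exact Submodule.finrank_mono (RDSAux.fwdSub_mono S ω hγ.le)
  refine ⟨hle, ?_, ?_⟩
  · -- interval in resolvent → equal ranks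
    intro H
    have hsel : ∀ γ' ∈ Set.Icc γ₁ γ₂, ∃ P a K,
        (∀ ω, P ω * P ω = P ω) ∧ (∀ t ω, P (S.θ t ω) * S.Φ t ω = S.Φ t ω * P ω) ∧
        0 < a ∧ 1 ≤ K ∧ ∀ᵐ ω ∂ℙ, RDSAux.Good S γ' a K P ω := by
      intro γ' hγ'
      obtain ⟨P, ⟨hm, hp, hi⟩, a, ha, K, hK, hae⟩ := H γ' hγ'
      exact ⟨P, a, K, hp, hi, ha, hK, RDSAux.ae_good S hae⟩
    choose PP aa KK hPP hII haa hKK haeG using hsel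
    set U : (Set.Icc γ₁ γ₂) → Set ℝ :=
      fun i => Set.Ioo ((i:ℝ) - aa i i.2) ((i:ℝ) + aa i i.2) with hU
    have hcov : Set.Icc γ₁ γ₂ ⊆ ⋃ i : (Set.Icc γ₁ γ₂), U i := by
      intro x hx
      refine Set.mem_iUnion.mpr ⟨⟨x, hx⟩, ?_⟩
      have := haa x hx
      simp only [hU, Set.mem_Ioo]
      constructor <;> linarith
    obtain ⟨F, hF⟩ := isCompact_Icc.elim_finite_subcover U (fun i => isOpen_Ioo) hcov
    have haeF : ∀ᵐ ω ∂ℙ, ∀ i ∈ F, RDSAux.Good S i (aa i i.2) (KK i i.2) (PP i i.2) ω :=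
      (ae_ball_iff F.countable_toSet).mpr fun i _ => haeG i i.2
    obtain ⟨ω, hgF, hg1, hg2, e1, e2⟩ :=
      (haeF.and (hGood₁.and (hGood₂.and (hr₁.and hr₂)))).exists
    set g : ℝ → ℕ := fun γ' => Module.finrank ℝ (RDSAux.fwdSub S γ' ω) with hg
    have hgc : ∀ i ∈ F, ∀ x ∈ U i, g x = clmRank (PP i i.2 ω) := by
      intro i hi x hx
      have := RDSAux.range_eq S (hPP i i.2) (hII i i.2) (haa i i.2) (hKK i i.2)
        (hgF i hi) (γ' := x) hx.1.le hx.2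
      rw [hg, clmRank, this]
    have hg₁ : g γ₁ = r₁ := by
      have R1 := RDSAux.range_eq S hProj₁ hInv₁ ha₁ hK₁ hg1 (γ' := γ₁)
        (by linarith) (by linarith)
      rw [hg]
      simp only
      rw [← R1, ← clmRank, e1]
    have hg₂ : g γ₂ = r₂ := by
      have R2 := RDSAux.range_eq S hProj₂ hInv₂ ha₂ hK₂ hg2 (γ' := γ₂)
        (by linarith) (by linarith)
      rw [hg]
      simp only
      rw [← R2, ← clmRank, e2]
    set T : Set ℝ := {x | x ∈ Set.Icc γ₁ γ₂ ∧ g x = r₁} with hT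
    have hTγ₁ : γ₁ ∈ T := ⟨⟨le_rfl, hγ.le⟩, hg₁⟩
    have hTbd : BddAbove T := ⟨γ₂, fun x hx => hx.1.2⟩
    set s := sSup T with hs
    have hs1 : γ₁ ≤ s := le_csSup hTbd hTγ₁
    have hs2 : s ≤ γ₂ := csSup_le ⟨γ₁, hTγ₁⟩ fun x hx => hx.1.2
    have hsI : s ∈ Set.Icc γ₁ γ₂ := ⟨hs1, hs2⟩
    obtain ⟨i, hiF, hsU⟩ : ∃ i ∈ F, s ∈ U i := by
      have := hF hsI
      simpa using this
    have hgs : g s = r₁ := by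
      obtain ⟨x, hxT, hxlt⟩ := exists_lt_of_lt_csSup ⟨γ₁, hTγ₁⟩ hsU.1
      have hxle : x ≤ s := le_csSup hTbd hxT
      have hxU : x ∈ U i := ⟨hxlt, lt_of_le_of_lt hxle hsU.2⟩
      rw [hgc i hiF s hsU, ← hgc i hiF x hxU]
      exact hxT.2
    have hsγ₂ : s = γ₂ := by
      by_contra hne
      have hslt : s < γ₂ := lt_of_le_of_ne hs2 hne
      set m := min γ₂ ((s + ((i:ℝ) + aa i i.2)) / 2) with hm
      have hsm : s < m := by
        refine lt_min hslt ?_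
        have := hsU.2
        linarith
      have hmU : m ∈ U i := by
        have h2' : s < (i:ℝ) + aa i i.2 := hsU.2
        have h1' : (i:ℝ) - aa i i.2 < s := hsU.1
        constructor
        · linarith
        · calc m ≤ (s + ((i:ℝ) + aa i i.2)) / 2 := min_le_right _ _
            _ < (i:ℝ) + aa i i.2 := by linarith
      have hmI : m ∈ Set.Icc γ₁ γ₂ := ⟨le_trans hs1 hsm.le, min_le_left _ _⟩
      have hgm : g m = r₁ := by
        rw [hgc i hiF m hmU, ← hgc i hiF s hsU]
        exact hgs
      exact absurd (le_csSup hTbd ⟨hmI, hgm⟩) (not_le.mpr hsm)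
    rw [← hg₁, ← hg₂, ← hsγ₂, hgs, hg₁]
  · -- equal ranks → interval in resolvent
    intro hr12 γ hγmem
    have hPeq : ∀ᵐ ω ∂ℙ, P₁ ω = P₂ ω := by
      filter_upwards [hGood₁, hGood₂, hr₁, hr₂] with ω hg1 hg2 e1 e2
      have R1 := RDSAux.range_eq S hProj₁ hInv₁ ha₁ hK₁ hg1 (γ' := γ₁)
        (by linarith) (by linarith)
      have R2 := RDSAux.range_eq S hProj₂ hInv₂ ha₂ hK₂ hg2 (γ' := γ₂)
        (by linarith) (by linarith)
      have k1 := RDSAux.ker_eq S hProj₁ hInv₁ ha₁ hK₁ hg1 (γ' := γ₁)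
        (by linarith) (by linarith)
      have k2 := RDSAux.ker_eq S hProj₂ hInv₂ ha₂ hK₂ hg2 (γ' := γ₂)
        (by linarith) (by linarith)
      have hRle : LinearMap.range ((P₁ ω : EuclideanSpace ℝ (Fin d) →ₗ[ℝ] EuclideanSpace ℝ (Fin d)))
          ≤ LinearMap.range ((P₂ ω : EuclideanSpace ℝ (Fin d) →ₗ[ℝ] EuclideanSpace ℝ (Fin d))) := by
        rw [R1, R2]; exact RDSAux.fwdSub_mono S ω hγ.le
      have hRrank : Module.finrank ℝ
            (LinearMap.range ((P₁ ω : EuclideanSpace ℝ (Fin d) →ₗ[ℝ] EuclideanSpace ℝ (Fin d))))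
          = Module.finrank ℝ
            (LinearMap.range ((P₂ ω : EuclideanSpace ℝ (Fin d) →ₗ[ℝ] EuclideanSpace ℝ (Fin d)))) := by
        rw [← clmRank, ← clmRank, e1, e2, hr12]
      have hReq := Submodule.eq_of_le_of_finrank_eq hRle hRrank
      have hKle : LinearMap.ker ((P₂ ω : EuclideanSpace ℝ (Fin d) →ₗ[ℝ] EuclideanSpace ℝ (Fin d)))
          ≤ LinearMap.ker ((P₁ ω : EuclideanSpace ℝ (Fin d) →ₗ[ℝ] EuclideanSpace ℝ (Fin d))) := by
        rw [k1, k2]; exact RDSAux.bwdSub_anti S ω hγ.le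
      have t1 := LinearMap.finrank_range_add_finrank_ker
        ((P₁ ω : EuclideanSpace ℝ (Fin d) →ₗ[ℝ] EuclideanSpace ℝ (Fin d)))
      have t2 := LinearMap.finrank_range_add_finrank_ker
        ((P₂ ω : EuclideanSpace ℝ (Fin d) →ₗ[ℝ] EuclideanSpace ℝ (Fin d)))
      have hKrank : Module.finrank ℝ
            (LinearMap.ker ((P₂ ω : EuclideanSpace ℝ (Fin d) →ₗ[ℝ] EuclideanSpace ℝ (Fin d))))
          = Module.finrank ℝ
            (LinearMap.ker ((P₁ ω : EuclideanSpace ℝ (Fin d) →ₗ[ℝ] EuclideanSpace ℝ (Fin d)))) := by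
        omega
      have hKeq := Submodule.eq_of_le_of_finrank_eq hKle hKrank
      exact RDSAux.projector_ext (hProj₁ ω) (hProj₂ ω) hReq hKeq.symm
    refine ⟨P₁, ⟨hM₁, hProj₁, hInv₁⟩, min a₁ a₂, lt_min ha₁ ha₂, max K₁ K₂,
      le_trans hK₁ (le_max_left _ _), ?_⟩
    have hK₁0 : (0:ℝ) ≤ K₁ := le_trans zero_le_one hK₁
    have hK₂0 : (0:ℝ) ≤ K₂ := le_trans zero_le_one hK₂
    filter_upwards [hae₁, hae₂, hPeq] with ω h1 h2 hpe
    constructor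
    · intro t ht
      calc ‖S.Φ t ω * P₁ ω‖ ≤ K₁ * Real.exp ((γ₁ - a₁) * t) := h1.1 t ht
        _ ≤ max K₁ K₂ * Real.exp ((γ - min a₁ a₂) * t) := by
            refine mul_le_mul (le_max_left _ _) (Real.exp_le_exp.mpr ?_)
              (Real.exp_pos _).le (le_trans hK₁0 (le_max_left _ _))
            have : γ₁ - a₁ ≤ γ - min a₁ a₂ := by
              have := min_le_left a₁ a₂
              have := hγmem.1
              linarith
            exact mul_le_mul_of_nonneg_right this ht
    · intro t ht
      rw [hpe]
      calc ‖S.Φ t ω * (1 - P₂ ω)‖ ≤ K₂ * Real.exp ((γ₂ + a₂) * t) := h2.2 t ht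
        _ ≤ max K₁ K₂ * Real.exp ((γ + min a₁ a₂) * t) := by
            refine mul_le_mul (le_max_right _ _) (Real.exp_le_exp.mpr ?_)
              (Real.exp_pos _).le (le_trans hK₁0 (le_max_left _ _))
            have : γ + min a₁ a₂ ≤ γ₂ + a₂ := by
              have := min_le_right a₁ a₂
              have := hγmem.2
              linarith
            exact mul_le_mul_of_nonpos_right this ht

end
end

section
/- Let (θ, Φ) be a linear random dynamical system on ℝ^d with dichotomy spectrum Σ, and define α⁺(ω) := ln⁺( sup_{t ∈ [0,1]} ‖Φ(t, ω)‖ ) and α⁻(ω) := ln⁺( sup_{t ∈ [0,1]} ‖Φ(t, ω)⁻¹‖ ), where ln⁺ x = max{0, ln x}. Then Σ is bounded from above (i.e., Σ ⊆ [−∞, c] for some c ∈ ℝ) if and only if esssup_{ω ∈ Ω} α⁺(ω) < ∞, and Σ is bounded from below (i.e., Σ ⊆ [c, +∞] for some c ∈ ℝ) if and only if esssup_{ω ∈ Ω} α⁻(ω) < ∞. -/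
open MeasureTheory Filter

noncomputable section

variable {Ω : Type*} [MeasurableSpace Ω] {ℙ : Measure Ω} {d : ℕ}

/-- `ln⁺ x = max {0, ln x}`. -/
def posLog (x : ℝ) : ℝ := max (Real.log x) 0

/-- `α⁺(ω) = ln⁺ (sup_{t ∈ [0,1]} ‖Φ(t, ω)‖)`. -/
def alphaPlus {Ω : Type*} [MeasurableSpace Ω] {ℙ : MeasureTheory.Measure Ω} {d : ℕ}
    (S : LinRDS ℙ d) (ω : Ω) : ℝ :=
  posLog (⨆ t : Set.Icc (0:ℝ) 1, ‖S.Φ t ω‖)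

/-- `α⁻(ω) = ln⁺ (sup_{t ∈ [0,1]} ‖Φ(t, ω)⁻¹‖)`. -/
def alphaMinus {Ω : Type*} [MeasurableSpace Ω] {ℙ : MeasureTheory.Measure Ω} {d : ℕ}
    (S : LinRDS ℙ d) (ω : Ω) : ℝ :=
  posLog (⨆ t : Set.Icc (0:ℝ) 1, ‖Ring.inverse (S.Φ t ω)‖)


section MyAux
variable {Ω : Type*} [MeasurableSpace Ω] {ℙ : Measure Ω} {d : ℕ}

lemma LinRDS.theta_comp (S : LinRDS ℙ d) (t s : ℝ) (ω : Ω) :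
    S.θ t (S.θ s ω) = S.θ (t + s) ω := (S.θ_add t s ω).symm

lemma LinRDS.Phi_inv (S : LinRDS ℙ d) (t : ℝ) (ω : Ω) :
    Ring.inverse (S.Φ t ω) = S.Φ (-t) (S.θ t ω) := by
  have h1 : S.Φ (-t) (S.θ t ω) * S.Φ t ω = 1 := by
    rw [← S.Φ_cocycle, neg_add_cancel, S.Φ_zero]
  have h2 : S.Φ t ω * S.Φ (-t) (S.θ t ω) = 1 := by
    have := S.Φ_cocycle t (-t) (S.θ t ω)
    rw [add_neg_cancel, S.Φ_zero, S.theta_comp, neg_add_cancel, S.θ_zero] at this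
    exact this.symm
  exact Ring.inverse_unit ⟨S.Φ t ω, S.Φ (-t) (S.θ t ω), h2, h1⟩

lemma LinRDS.cont_inv (S : LinRDS ℙ d) {ω : Ω} (hc : Continuous fun t : ℝ => S.Φ t ω) :
    Continuous fun t : ℝ => Ring.inverse (S.Φ t ω) := by
  rw [continuous_iff_continuousAt]
  intro t
  have hu := (S.Φ_isUnit t ω)
  have h := NormedRing.inverse_continuousAt hu.unit
  rw [hu.unit_spec] at h
  show ContinuousAt (Ring.inverse ∘ fun t : ℝ => S.Φ t ω) t
  exact ContinuousAt.comp h hc.continuousAt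

lemma posLog_nonneg (x : ℝ) : 0 ≤ max (Real.log x) 0 := le_max_right _ _

lemma posLog_mono {x y : ℝ} (hx : 0 ≤ x) (h : x ≤ y) :
    max (Real.log x) 0 ≤ max (Real.log y) 0 := by
  rcases eq_or_lt_of_le hx with h0 | h0
  · simp [← h0, Real.log_zero]
  · exact max_le_max (Real.log_le_log h0 h) le_rfl

lemma le_exp_of_posLog_le {x C : ℝ} (hx : 0 ≤ x) (h : max (Real.log x) 0 ≤ C) :
    x ≤ Real.exp C := by
  rcases eq_or_lt_of_le hx with h0 | h0
  · rw [← h0]; positivity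
  · calc x = Real.exp (Real.log x) := (Real.exp_log h0).symm
      _ ≤ Real.exp C := Real.exp_le_exp.2 (le_trans (le_max_left _ _) h)

lemma cont_le_of_rat {f g : ℝ → ℝ} (hf : Continuous f) (hg : Continuous g) {t : ℝ}
    (h : ∀ ε > (0:ℝ), ∃ q : ℚ, |t - (q:ℝ)| < ε ∧ f q ≤ g q) : f t ≤ g t := by
  by_contra hlt
  push_neg at hlt
  have hopen : {s : ℝ | g s < f s} ∈ nhds t := (isOpen_lt hg hf).mem_nhds hlt
  obtain ⟨ε, hε, hball⟩ := Metric.mem_nhds_iff.1 hopen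
  obtain ⟨q, hq, hfg⟩ := h ε hε
  have : (q:ℝ) ∈ Metric.ball t ε := by
    rw [Metric.mem_ball, dist_comm, Real.dist_eq]; exact hq
  exact absurd hfg (not_le.2 (hball this))

lemma bdd_norm_range {X : Type*} [NormedAddCommGroup X] {F : ℝ → X} (hc : Continuous F) :
    BddAbove (Set.range fun t : Set.Icc (0:ℝ) 1 => ‖F t‖) := by
  have : (Set.range fun t : Set.Icc (0:ℝ) 1 => ‖F t‖)
      = (fun t => ‖F t‖) '' Set.Icc (0:ℝ) 1 := Set.range_restrict (fun t => ‖F t‖) (Set.Icc 0 1)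
  rw [this]
  exact (isCompact_Icc.image hc.norm).bddAbove

lemma norm_one_le_CLM : ‖(1 : EuclideanSpace ℝ (Fin d) →L[ℝ] EuclideanSpace ℝ (Fin d))‖ ≤ 1 := by
  rw [ContinuousLinearMap.one_def]; exact ContinuousLinearMap.norm_id_le

lemma LinRDS.fwd_bound (S : LinRDS ℙ d) {ω : Ω} {M : ℝ} (hM : 1 ≤ M)
    (H : ∀ n : ℕ, ∀ t ∈ Set.Icc (0:ℝ) 1, ‖S.Φ t (S.θ (n:ℝ) ω)‖ ≤ M) :
    ∀ t : ℝ, 0 ≤ t → ‖S.Φ t ω‖ ≤ M * Real.exp (Real.log M * t) := by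
  have hM0 : (0:ℝ) < M := lt_of_lt_of_le one_pos hM
  have hlog : 0 ≤ Real.log M := Real.log_nonneg hM
  have hnat : ∀ n : ℕ, ‖S.Φ (n:ℝ) ω‖ ≤ M ^ n := by
    intro n
    induction n with
    | zero =>
      rw [Nat.cast_zero, S.Φ_zero, pow_zero]
      exact norm_one_le_CLM
    | succ n ih =>
      have hcast : ((n+1 : ℕ):ℝ) = 1 + (n:ℝ) := by push_cast; ring
      rw [hcast, S.Φ_cocycle]
      calc ‖S.Φ 1 (S.θ (n:ℝ) ω) * S.Φ (n:ℝ) ω‖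
          ≤ ‖S.Φ 1 (S.θ (n:ℝ) ω)‖ * ‖S.Φ (n:ℝ) ω‖ := norm_mul_le _ _
        _ ≤ M * M ^ n := mul_le_mul (H n 1 (by norm_num)) ih (norm_nonneg _) (le_of_lt hM0)
        _ = M ^ (n+1) := by rw [pow_succ, mul_comm]
  intro t ht
  set n := ⌊t⌋₊ with hn
  have hn1 : (n:ℝ) ≤ t := Nat.floor_le ht
  have hn2 : t < (n:ℝ) + 1 := Nat.lt_floor_add_one t
  have hco := S.Φ_cocycle (t - (n:ℝ)) (n:ℝ) ω
  rw [sub_add_cancel] at hco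
  have hMn : M ^ n ≤ Real.exp (Real.log M * t) := by
    have h1 : M ^ n = Real.exp ((n:ℝ) * Real.log M) := by
      rw [Real.exp_nat_mul, Real.exp_log hM0]
    rw [h1]
    apply Real.exp_le_exp.2
    rw [mul_comm]
    exact mul_le_mul_of_nonneg_left hn1 hlog
  calc ‖S.Φ t ω‖ = ‖S.Φ (t - (n:ℝ)) (S.θ (n:ℝ) ω) * S.Φ (n:ℝ) ω‖ := by rw [← hco]
    _ ≤ ‖S.Φ (t - (n:ℝ)) (S.θ (n:ℝ) ω)‖ * ‖S.Φ (n:ℝ) ω‖ := norm_mul_le _ _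
    _ ≤ M * M ^ n :=
        mul_le_mul (H n _ ⟨by linarith, by linarith⟩) (hnat n) (norm_nonneg _) (le_of_lt hM0)
    _ ≤ M * Real.exp (Real.log M * t) := by
        exact mul_le_mul_of_nonneg_left hMn (le_of_lt hM0)

lemma LinRDS.bwd_piece (S : LinRDS ℙ d) {ω : Ω} {M : ℝ}
    (H : ∀ q : ℚ, ∀ t ∈ Set.Icc (0:ℝ) 1, ‖Ring.inverse (S.Φ t (S.θ (q:ℝ) ω))‖ ≤ M)
    (s : ℚ) (hs1 : (-1:ℝ) ≤ (s:ℝ)) (hs0 : (s:ℝ) ≤ 0) (u : ℚ) :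
    ‖S.Φ (s:ℝ) (S.θ (u:ℝ) ω)‖ ≤ M := by
  have key : Ring.inverse (S.Φ (-(s:ℝ)) (S.θ (((s + u : ℚ)):ℝ) ω)) = S.Φ (s:ℝ) (S.θ (u:ℝ) ω) := by
    rw [S.Phi_inv, neg_neg, S.theta_comp]
    congr 1
    push_cast; ring
  rw [← key]
  exact H (s+u) (-(s:ℝ)) ⟨by linarith, by linarith⟩

lemma LinRDS.bwd_nat (S : LinRDS ℙ d) {ω : Ω} {M : ℝ} (hM : 1 ≤ M)
    (H : ∀ q : ℚ, ∀ t ∈ Set.Icc (0:ℝ) 1, ‖Ring.inverse (S.Φ t (S.θ (q:ℝ) ω))‖ ≤ M) :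
    ∀ n : ℕ, ∀ u : ℚ, ‖S.Φ (-(n:ℝ)) (S.θ (u:ℝ) ω)‖ ≤ M ^ n := by
  have hM0 : (0:ℝ) < M := lt_of_lt_of_le one_pos hM
  intro n
  induction n with
  | zero =>
    intro u
    rw [Nat.cast_zero, neg_zero, S.Φ_zero, pow_zero]
    exact norm_one_le_CLM
  | succ n ih =>
    intro u
    have hcast : (-((n+1 : ℕ):ℝ)) = (-1) + (-(n:ℝ)) := by push_cast; ring
    rw [hcast, S.Φ_cocycle, S.theta_comp]
    have hsh : (-(n:ℝ)) + (u:ℝ) = (((u - n : ℚ)):ℝ) := by push_cast; ring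
    rw [hsh]
    calc ‖S.Φ (-1) (S.θ (((u - n : ℚ)):ℝ) ω) * S.Φ (-(n:ℝ)) (S.θ (u:ℝ) ω)‖
        ≤ ‖S.Φ (-1) (S.θ (((u - n : ℚ)):ℝ) ω)‖ * ‖S.Φ (-(n:ℝ)) (S.θ (u:ℝ) ω)‖ := norm_mul_le _ _
      _ ≤ M * M ^ n := by
          refine mul_le_mul ?_ (ih u) (norm_nonneg _) (le_of_lt hM0)
          have := S.bwd_piece H (-1) (by norm_num) (by norm_num) (u - n)
          rwa [(by norm_num : (((-1:ℚ)):ℝ) = (-1:ℝ))] at this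
      _ = M ^ (n+1) := by rw [pow_succ, mul_comm]

lemma LinRDS.bwd_rat (S : LinRDS ℙ d) {ω : Ω} {M : ℝ} (hM : 1 ≤ M)
    (H : ∀ q : ℚ, ∀ t ∈ Set.Icc (0:ℝ) 1, ‖Ring.inverse (S.Φ t (S.θ (q:ℝ) ω))‖ ≤ M) :
    ∀ q : ℚ, (q:ℝ) ≤ 0 → ‖S.Φ (q:ℝ) ω‖ ≤ M * Real.exp (-(Real.log M) * (q:ℝ)) := by
  have hM0 : (0:ℝ) < M := lt_of_lt_of_le one_pos hM
  have hlog : 0 ≤ Real.log M := Real.log_nonneg hM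
  intro q hq
  rcases eq_or_lt_of_le hq with h0 | h0
  · rw [h0, mul_zero, Real.exp_zero, mul_one, S.Φ_zero]
    exact le_trans norm_one_le_CLM hM
  · set n : ℕ := ⌈-(q:ℝ)⌉₊ with hndef
    have hqpos : (0:ℝ) < -(q:ℝ) := by linarith
    have hn1 : 1 ≤ n := Nat.one_le_iff_ne_zero.2 (by
      intro h
      have := Nat.ceil_eq_zero.1 h
      linarith)
    have hnge : -(q:ℝ) ≤ (n:ℝ) := Nat.le_ceil _
    have hnlt : (n:ℝ) < -(q:ℝ) + 1 := by
      have := Nat.ceil_lt_add_one (le_of_lt hqpos)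
      exact this
    set m : ℕ := n - 1 with hmdef
    have hmcast : (m:ℝ) = (n:ℝ) - 1 := by
      rw [hmdef, Nat.cast_sub hn1]; norm_num
    -- decomposition: q = (q + m) + (-m)
    have hco := S.Φ_cocycle ((q:ℝ) + (m:ℝ)) (-(m:ℝ)) ω
    have hsum : ((q:ℝ) + (m:ℝ)) + (-(m:ℝ)) = (q:ℝ) := by ring
    rw [hsum] at hco
    have hP1 : ‖S.Φ ((q:ℝ) + (m:ℝ)) (S.θ (-(m:ℝ)) ω)‖ ≤ M := by
      have hcast1 : (q:ℝ) + (m:ℝ) = (((q + m : ℚ)):ℝ) := by push_cast; ring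
      have hcast2 : (-(m:ℝ)) = (((-m : ℚ)):ℝ) := by push_cast; ring
      rw [hcast1, hcast2]
      exact S.bwd_piece H (q + m) (by push_cast; linarith [hmcast]; ) (by push_cast; linarith [hmcast]) (-m)
    have hP2 : ‖S.Φ (-(m:ℝ)) ω‖ ≤ M ^ m := by
      have h0 : S.θ ((0:ℚ):ℝ) ω = ω := by
        have : ((0:ℚ):ℝ) = (0:ℝ) := by norm_num
        rw [this, S.θ_zero]
      have := S.bwd_nat hM H m 0
      rwa [h0] at this
    have hMn : M * M ^ m ≤ M * Real.exp (-(Real.log M) * (q:ℝ)) := by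
      apply mul_le_mul_of_nonneg_left _ (le_of_lt hM0)
      have h1 : M ^ m = Real.exp ((m:ℝ) * Real.log M) := by
        rw [Real.exp_nat_mul, Real.exp_log hM0]
      rw [h1]
      apply Real.exp_le_exp.2
      have hmq : (m:ℝ) ≤ -(q:ℝ) := by rw [hmcast]; linarith
      calc (m:ℝ) * Real.log M ≤ (-(q:ℝ)) * Real.log M :=
            mul_le_mul_of_nonneg_right hmq hlog
        _ = -(Real.log M) * (q:ℝ) := by ring
    calc ‖S.Φ (q:ℝ) ω‖ = ‖S.Φ ((q:ℝ) + (m:ℝ)) (S.θ (-(m:ℝ)) ω) * S.Φ (-(m:ℝ)) ω‖ := by rw [← hco]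
      _ ≤ ‖S.Φ ((q:ℝ) + (m:ℝ)) (S.θ (-(m:ℝ)) ω)‖ * ‖S.Φ (-(m:ℝ)) ω‖ := norm_mul_le _ _
      _ ≤ M * M ^ m := mul_le_mul hP1 hP2 (norm_nonneg _) (le_of_lt hM0)
      _ ≤ M * Real.exp (-(Real.log M) * (q:ℝ)) := hMn

lemma LinRDS.bwd_bound (S : LinRDS ℙ d) {ω : Ω} {M : ℝ} (hM : 1 ≤ M)
    (hc : Continuous fun t : ℝ => S.Φ t ω)
    (H : ∀ q : ℚ, ∀ t ∈ Set.Icc (0:ℝ) 1, ‖Ring.inverse (S.Φ t (S.θ (q:ℝ) ω))‖ ≤ M) :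
    ∀ t : ℝ, t ≤ 0 → ‖S.Φ t ω‖ ≤ M * Real.exp (-(Real.log M) * t) := by
  intro t ht
  apply cont_le_of_rat hc.norm
    (continuous_const.mul (Real.continuous_exp.comp (continuous_const.mul continuous_id)))
  intro ε hε
  rcases eq_or_lt_of_le ht with h0 | h0
  · refine ⟨0, ?_, S.bwd_rat hM H 0 (by norm_num)⟩
    rw [h0]
    simpa using hε
  · obtain ⟨q, hq1, hq2⟩ := exists_rat_btwn (sub_lt_self t hε)
    refine ⟨q, ?_, S.bwd_rat hM H q (by linarith)⟩
    rw [abs_of_pos (by linarith)]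
    linarith

lemma icc_rat_bound {f : ℝ → ℝ} (hf : Continuous f) {M : ℝ}
    (h : ∀ q : ℚ, (q:ℝ) ∈ Set.Icc (0:ℝ) 1 → f q ≤ M) :
    ∀ t ∈ Set.Icc (0:ℝ) 1, f t ≤ M := by
  rintro t ⟨ht0, ht1⟩
  apply cont_le_of_rat hf continuous_const
  intro ε hε
  rcases eq_or_lt_of_le ht0 with h0 | h0
  · refine ⟨0, ?_, h 0 (by norm_num)⟩
    simp [← h0, hε]
  · have hmax : max (t - ε) 0 < t := max_lt (by linarith) h0
    obtain ⟨q, hq1, hq2⟩ := exists_rat_btwn hmax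
    have hq0 : (0:ℝ) ≤ (q:ℝ) := le_of_lt (lt_of_le_of_lt (le_max_right _ _) hq1)
    refine ⟨q, ?_, h q ⟨hq0, by linarith⟩⟩
    have : t - ε < (q:ℝ) := lt_of_le_of_lt (le_max_left _ _) hq1
    rw [abs_of_pos (by linarith)]
    linarith

end MyAux

section AuxED
variable {Ω : Type*} [MeasurableSpace Ω] {ℙ : Measure Ω} {d : ℕ}

lemma LinRDS.proj_one (S : LinRDS ℙ d) :
    S.InvProjector (fun _ : Ω => (1 : EuclideanSpace ℝ (Fin d) →L[ℝ] EuclideanSpace ℝ (Fin d))) :=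
  ⟨fun _ => measurable_const, fun _ => one_mul 1, fun t ω => by rw [one_mul, mul_one]⟩

lemma LinRDS.proj_zero (S : LinRDS ℙ d) :
    S.InvProjector (fun _ : Ω => (0 : EuclideanSpace ℝ (Fin d) →L[ℝ] EuclideanSpace ℝ (Fin d))) :=
  ⟨fun _ => measurable_const, fun _ => mul_zero 0, fun t ω => by rw [zero_mul, mul_zero]⟩

lemma LinRDS.isED_one (S : LinRDS ℙ d) {x L K : ℝ} (hK : 1 ≤ K) (hL : L ≤ x - 1)
    (hb : ∀ᵐ ω ∂ℙ, ∀ t : ℝ, 0 ≤ t → ‖S.Φ t ω‖ ≤ K * Real.exp (L * t)) :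
    S.IsED x (fun _ => 1) := by
  refine ⟨S.proj_one, 1, one_pos, K, hK, ?_⟩
  filter_upwards [hb] with ω hω
  constructor
  · intro t ht
    rw [mul_one]
    refine le_trans (hω t ht) ?_
    have : L * t ≤ (x - 1) * t := mul_le_mul_of_nonneg_right hL ht
    exact mul_le_mul_of_nonneg_left (Real.exp_le_exp.2 this) (by linarith)
  · intro t _
    rw [sub_self, mul_zero, norm_zero]
    positivity

lemma LinRDS.isED_zero (S : LinRDS ℙ d) {x L K : ℝ} (hK : 1 ≤ K) (hL : x + 1 ≤ L)
    (hb : ∀ᵐ ω ∂ℙ, ∀ t : ℝ, t ≤ 0 → ‖S.Φ t ω‖ ≤ K * Real.exp (L * t)) :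
    S.IsED x (fun _ => 0) := by
  refine ⟨S.proj_zero, 1, one_pos, K, hK, ?_⟩
  filter_upwards [hb] with ω hω
  constructor
  · intro t _
    rw [mul_zero, norm_zero]
    positivity
  · intro t ht
    rw [sub_zero, mul_one]
    refine le_trans (hω t ht) ?_
    have : L * t ≤ (x + 1) * t := mul_le_mul_of_nonpos_right hL ht
    exact mul_le_mul_of_nonneg_left (Real.exp_le_exp.2 this) (by linarith)

end AuxED

/-- The dichotomy spectrum is bounded from above iff `esssup α⁺ < ∞`, and
bounded from below iff `esssup α⁻ < ∞`. -/
theorem spectrum_bounded_iff_essSup_finite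
    {Ω : Type*} [MeasurableSpace Ω] {ℙ : Measure Ω} [IsProbabilityMeasure ℙ] {d : ℕ}
    (S : LinRDS ℙ d)
    (hcont : ∀ ω, Continuous fun t : ℝ => S.Φ t ω) :
    ((∃ c : ℝ, ∀ γ ∈ S.spectrum, γ ≤ (c : EReal)) ↔
      ∃ C : ℝ, ∀ᵐ ω ∂ℙ, alphaPlus S ω ≤ C) ∧
    ((∃ c : ℝ, ∀ γ ∈ S.spectrum, (c : EReal) ≤ γ) ↔
      ∃ C : ℝ, ∀ᵐ ω ∂ℙ, alphaMinus S ω ≤ C) := by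
  haveI hne : Nonempty ↑(Set.Icc (0:ℝ) 1) := ⟨⟨0, by norm_num⟩⟩
  constructor
  · constructor
    · -- upper bounded ⇒ essSup α⁺ finite
      rintro ⟨c, hc⟩
      have htop : S.AdmitsEDE ⊤ := by
        by_contra h
        exact (not_le.2 (EReal.coe_lt_top c)) (hc ⊤ h)
      rcases htop with ⟨g, hg, -⟩ | ⟨-, g, P, hED, hP⟩ | ⟨hbad, -⟩
      · exact absurd hg (by simp)
      · obtain ⟨hproj, a, ha, K, hK, hae⟩ := hED
        have hKpos : (0:ℝ) < K := lt_of_lt_of_le one_pos hK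
        refine ⟨posLog (K * Real.exp |g - a|), ?_⟩
        filter_upwards [hae, hP] with ω hω hPω
        unfold alphaPlus posLog
        apply posLog_mono (Real.iSup_nonneg fun t => norm_nonneg _)
        apply ciSup_le
        rintro ⟨t, ht0, ht1⟩
        have h1 := hω.1 t ht0
        rw [hPω, mul_one] at h1
        refine le_trans h1 ?_
        have h2 : (g - a) * t ≤ |g - a| := by
          calc (g-a)*t ≤ |(g-a)*t| := le_abs_self _
            _ = |g-a| * |t| := abs_mul _ _
            _ ≤ |g-a| * 1 := by
                refine mul_le_mul_of_nonneg_left ?_ (abs_nonneg _)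
                rw [abs_of_nonneg ht0]; exact ht1
            _ = |g-a| := mul_one _
        exact mul_le_mul_of_nonneg_left (Real.exp_le_exp.2 h2) (le_of_lt hKpos)
      · exact absurd hbad (by simp)
    · -- essSup α⁺ finite ⇒ upper bounded
      rintro ⟨C, hC⟩
      set M := Real.exp |C| with hMdef
      have hM : 1 ≤ M := Real.one_le_exp (abs_nonneg C)
      have hae0 : ∀ᵐ ω ∂ℙ, ∀ t ∈ Set.Icc (0:ℝ) 1, ‖S.Φ t ω‖ ≤ M := by
        filter_upwards [hC] with ω hω t ht
        have hbdd := bdd_norm_range (hcont ω)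
        have hsup : (⨆ t : Set.Icc (0:ℝ) 1, ‖S.Φ t ω‖) ≤ M := by
          apply le_exp_of_posLog_le (Real.iSup_nonneg fun t => norm_nonneg _)
          exact le_trans hω (le_abs_self C)
        exact le_trans (le_ciSup hbdd ⟨t, ht⟩) hsup
      have haeN : ∀ᵐ ω ∂ℙ, ∀ n : ℕ, ∀ t ∈ Set.Icc (0:ℝ) 1, ‖S.Φ t (S.θ (n:ℝ) ω)‖ ≤ M :=
        ae_all_iff.2 fun n => (S.θ_pres (n:ℝ)).quasiMeasurePreserving.ae hae0
      have hb : ∀ᵐ ω ∂ℙ, ∀ t : ℝ, 0 ≤ t → ‖S.Φ t ω‖ ≤ M * Real.exp (Real.log M * t) := by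
        filter_upwards [haeN] with ω hω
        exact S.fwd_bound hM hω
      refine ⟨Real.log M + 1, ?_⟩
      intro γ hγ
      simp only [LinRDS.spectrum, Set.mem_setOf_eq] at hγ
      induction γ using EReal.rec with
      | bot => exact bot_le
      | top =>
        exact absurd (Or.inr (Or.inl ⟨rfl, Real.log M + 2, fun _ => 1,
          S.isED_one hM (by linarith) hb, ae_of_all ℙ fun ω => rfl⟩)) hγ
      | coe x =>
        by_contra hx
        rw [EReal.coe_le_coe_iff] at hx
        push_neg at hx
        exact hγ (Or.inl ⟨x, rfl, ⟨fun _ => 1, S.isED_one hM (by linarith) hb⟩⟩)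
  · constructor
    · -- lower bounded ⇒ essSup α⁻ finite
      rintro ⟨c, hc⟩
      have hbot : S.AdmitsEDE ⊥ := by
        by_contra h
        have h2 := hc ⊥ h
        rw [le_bot_iff] at h2
        exact EReal.coe_ne_bot c h2
      rcases hbot with ⟨g, hg, -⟩ | ⟨hbad, -⟩ | ⟨-, g, P, hED, hP⟩
      · exact absurd hg (by simp)
      · exact absurd hbad (by simp)
      · obtain ⟨hproj, a, ha, K, hK, hae⟩ := hED
        have hKpos : (0:ℝ) < K := lt_of_lt_of_le one_pos hK
        have hae2 : ∀ᵐ ω ∂ℙ, ∀ t : ℝ, t ≤ 0 → ‖S.Φ t ω‖ ≤ K * Real.exp ((g + a) * t) := by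
          filter_upwards [hae, hP] with ω hω hPω t ht
          have h1 := hω.2 t ht
          rwa [hPω, sub_zero, mul_one] at h1
        have haeQ : ∀ᵐ ω ∂ℙ, ∀ q : ℚ, ∀ t : ℝ, t ≤ 0 →
            ‖S.Φ t (S.θ (q:ℝ) ω)‖ ≤ K * Real.exp ((g + a) * t) :=
          ae_all_iff.2 fun q => (S.θ_pres (q:ℝ)).quasiMeasurePreserving.ae hae2
        refine ⟨posLog (K * Real.exp |g + a|), ?_⟩
        filter_upwards [haeQ] with ω hω
        have hq : ∀ q : ℚ, (q:ℝ) ∈ Set.Icc (0:ℝ) 1 →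
            ‖Ring.inverse (S.Φ (q:ℝ) ω)‖ ≤ K * Real.exp |g + a| := by
          rintro q ⟨hq0, hq1⟩
          rw [S.Phi_inv]
          refine le_trans (hω q (-(q:ℝ)) (by linarith)) ?_
          have h2 : (g + a) * (-(q:ℝ)) ≤ |g + a| := by
            calc (g+a)*(-(q:ℝ)) ≤ |(g+a)*(-(q:ℝ))| := le_abs_self _
              _ = |g+a| * |(-(q:ℝ))| := abs_mul _ _
              _ ≤ |g+a| * 1 := by
                  refine mul_le_mul_of_nonneg_left ?_ (abs_nonneg _)
                  rw [abs_neg, abs_of_nonneg hq0]; exact hq1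
              _ = |g+a| := mul_one _
          exact mul_le_mul_of_nonneg_left (Real.exp_le_exp.2 h2) (le_of_lt hKpos)
        have hall := icc_rat_bound (Continuous.norm (S.cont_inv (hcont ω))) hq
        unfold alphaMinus posLog
        apply posLog_mono (Real.iSup_nonneg fun t => norm_nonneg _)
        apply ciSup_le
        rintro ⟨t, ht⟩
        exact hall t ht
    · -- essSup α⁻ finite ⇒ lower bounded
      rintro ⟨C, hC⟩
      set M := Real.exp |C| with hMdef
      have hM : 1 ≤ M := Real.one_le_exp (abs_nonneg C)
      have hae0 : ∀ᵐ ω ∂ℙ, ∀ t ∈ Set.Icc (0:ℝ) 1, ‖Ring.inverse (S.Φ t ω)‖ ≤ M := by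
        filter_upwards [hC] with ω hω t ht
        have hbdd := bdd_norm_range (S.cont_inv (hcont ω))
        have hsup : (⨆ t : Set.Icc (0:ℝ) 1, ‖Ring.inverse (S.Φ t ω)‖) ≤ M := by
          apply le_exp_of_posLog_le (Real.iSup_nonneg fun t => norm_nonneg _)
          exact le_trans hω (le_abs_self C)
        exact le_trans (le_ciSup hbdd ⟨t, ht⟩) hsup
      have haeQ : ∀ᵐ ω ∂ℙ, ∀ q : ℚ, ∀ t ∈ Set.Icc (0:ℝ) 1,
          ‖Ring.inverse (S.Φ t (S.θ (q:ℝ) ω))‖ ≤ M :=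
        ae_all_iff.2 fun q => (S.θ_pres (q:ℝ)).quasiMeasurePreserving.ae hae0
      have hb : ∀ᵐ ω ∂ℙ, ∀ t : ℝ, t ≤ 0 → ‖S.Φ t ω‖ ≤ M * Real.exp (-(Real.log M) * t) := by
        filter_upwards [haeQ] with ω hω
        exact S.bwd_bound hM (hcont ω) hω
      refine ⟨-(Real.log M) - 1, ?_⟩
      intro γ hγ
      simp only [LinRDS.spectrum, Set.mem_setOf_eq] at hγ
      induction γ using EReal.rec with
      | top => exact le_top
      | bot =>
        exact absurd (Or.inr (Or.inr ⟨rfl, -(Real.log M) - 2, fun _ => 0,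
          S.isED_zero hM (by linarith) hb, ae_of_all ℙ fun ω => rfl⟩)) hγ
      | coe x =>
        by_contra hx
        rw [EReal.coe_le_coe_iff] at hx
        push_neg at hx
        exact hγ (Or.inl ⟨x, rfl, ⟨fun _ => 0, S.isED_zero hM (by linarith) hb⟩⟩)


end
end

section
/- If the dichotomy spectrum Σ of a linear random dynamical system (θ, Φ) on ℝ^d is bounded, i.e., Σ ⊆ [c₁, c₂] for some real numbers c₁ ≤ c₂, then Φ satisfies the integrability condition of the Multiplicative Ergodic Theorem: the functions ω ↦ ln⁺( sup_{t ∈ [0,1]} ‖Φ(t, ω)‖ ) and ω ↦ ln⁺( sup_{t ∈ [0,1]} ‖Φ(t, ω)⁻¹‖ ) are in L¹(ℙ). -/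
open MeasureTheory Filter

noncomputable section

variable {Ω : Type*} [MeasurableSpace Ω] {ℙ : Measure Ω} {d : ℕ}

/-! Boundedness of the spectrum keeps `±∞` out of it. A dichotomy with projector `Id` bounds
`‖Φ(t, ω)‖` for `t ∈ [0, 1]`, and one with projector `0` bounds it for `t ∈ [-1, 0]`; the latter
controls the inverse through `Φ(t, ω)⁻¹ = Φ(-t, θ_t ω)` and the `θ_t`-invariance of `ℙ`.
Continuity in `t` reduces each supremum over `[0, 1]` to one over a countable dense set, which
makes it measurable and turns bounds holding a.s. for each fixed `t` into a.s. uniform ones. -/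

open Set TopologicalSpace

theorem ContinuousLinearMap.measurable_of_measurable_apply
    {E F : Type*} [NormedAddCommGroup E] [NormedSpace ℝ E] [FiniteDimensional ℝ E]
    [NormedAddCommGroup F] [NormedSpace ℝ F] [FiniteDimensional ℝ F]
    [MeasurableSpace F] [BorelSpace F]
    {f : Ω → E →L[ℝ] F} (hf : ∀ x, Measurable fun ω => f ω x) :
    Measurable f := by
  let b := Module.finBasis ℝ E
  let L : (E →L[ℝ] F) →ₗ[ℝ] (Fin (Module.finrank ℝ E) → F) :=
    LinearMap.pi fun i => (ContinuousLinearMap.apply ℝ F (b i)).toLinearMap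
  have hL : Function.Injective L := fun A B hAB =>
    ContinuousLinearMap.coe_injective (b.ext fun i => congrFun hAB i)
  have hemb : MeasurableEmbedding L :=
    (LinearMap.isClosedEmbedding_of_injective (LinearMap.ker_eq_bot.mpr hL)).measurableEmbedding
  exact hemb.measurable_comp_iff.mp (measurable_pi_lambda _ fun i => hf (b i))

theorem mul_le_abs_of_abs_le_one {c t : ℝ} (ht : |t| ≤ 1) : c * t ≤ |c| := calc
  c * t ≤ |c| * |t| := (le_abs_self _).trans (abs_mul c t).le
  _ ≤ |c| := mul_le_of_le_one_right (abs_nonneg c) ht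

theorem Continuous.ringInverse_of_isUnit {R X : Type*} [NormedRing R] [HasSummableGeomSeries R]
    [TopologicalSpace X] {f : X → R} (hf : Continuous f) (hu : ∀ x, IsUnit (f x)) :
    Continuous fun x => Ring.inverse (f x) :=
  continuous_iff_continuousAt.mpr fun x => by
    obtain ⟨u, hu⟩ := hu x
    exact ContinuousAt.comp (f := f) (hu ▸ NormedRing.inverse_continuousAt u) hf.continuousAt

section SupOfContinuous

variable {γ : Type*} [TopologicalSpace γ] [SeparableSpace γ]

theorem exists_countable_ciSup_eq_of_continuous {X : Type*} {f : γ → X → ℝ}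
    (hf : ∀ ω, Continuous (f · ω)) :
    ∃ s : Set γ, s.Countable ∧ Dense s ∧ ∀ ω, ⨆ t : s, f t ω = ⨆ t, f t ω := by
  obtain ⟨s, hs, hd⟩ := exists_countable_dense γ
  exact ⟨s, hs, hd, fun ω => hd.ciSup' (hf ω)⟩

theorem measurable_ciSup_of_continuous {f : γ → Ω → ℝ} (hf : ∀ ω, Continuous (f · ω))
    (hm : ∀ t, Measurable (f t)) : Measurable fun ω => ⨆ t, f t ω := by
  obtain ⟨s, hs, -, hsup⟩ := exists_countable_ciSup_eq_of_continuous hf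
  have := hs.to_subtype
  simp_rw [← hsup]
  exact Measurable.iSup fun t => hm t

theorem ae_ciSup_le_of_continuous [Nonempty γ] {f : γ → Ω → ℝ} {μ : Measure Ω} {M : ℝ}
    (hf : ∀ ω, Continuous (f · ω)) (hM : ∀ t, ∀ᵐ ω ∂μ, f t ω ≤ M) :
    ∀ᵐ ω ∂μ, ⨆ t, f t ω ≤ M := by
  obtain ⟨s, hs, hd, hsup⟩ := exists_countable_ciSup_eq_of_continuous hf
  have := hs.to_subtype
  have := hd.nonempty.to_subtype
  filter_upwards [ae_all_iff.mpr fun t : s => hM t] with ω hω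
  exact hsup ω ▸ ciSup_le hω

end SupOfContinuous

theorem measurable_posLog : Measurable posLog :=
  Real.measurable_log.max measurable_const

theorem posLog_nonneg_s10 (x : ℝ) : 0 ≤ posLog x :=
  le_max_right _ _

theorem posLog_le_posLog {x y : ℝ} (hx : 0 ≤ x) (hxy : x ≤ y) : posLog x ≤ posLog y := by
  rcases hx.eq_or_lt with rfl | hx
  · simp only [posLog, Real.log_zero, max_self]
    exact posLog_nonneg_s10 y
  · exact max_le_max_right 0 (Real.log_le_log hx hxy)

theorem integrable_posLog_of_ae_le {μ : Measure Ω} [IsFiniteMeasure μ] {F : Ω → ℝ}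
    (hF : Measurable F) (h0 : ∀ ω, 0 ≤ F ω) {M : ℝ} (hM : ∀ᵐ ω ∂μ, F ω ≤ M) :
    Integrable (fun ω => posLog (F ω)) μ := by
  refine (integrable_const (posLog M)).mono' (measurable_posLog.comp hF).aestronglyMeasurable ?_
  filter_upwards [hM] with ω hω
  rw [Real.norm_of_nonneg (posLog_nonneg_s10 _)]
  exact posLog_le_posLog (h0 ω) hω

theorem integrable_posLog_ciSup_of_continuous {γ : Type*} [TopologicalSpace γ]
    [SeparableSpace γ] [Nonempty γ] {μ : Measure Ω} [IsFiniteMeasure μ] {f : γ → Ω → ℝ}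
    (hf : ∀ ω, Continuous (f · ω)) (hm : ∀ t, Measurable (f t)) (h0 : ∀ t ω, 0 ≤ f t ω)
    {M : ℝ} (hM : ∀ t, ∀ᵐ ω ∂μ, f t ω ≤ M) :
    Integrable (fun ω => posLog (⨆ t, f t ω)) μ :=
  integrable_posLog_of_ae_le (measurable_ciSup_of_continuous hf hm)
    (fun ω => Real.iSup_nonneg fun t => h0 t ω) (ae_ciSup_le_of_continuous hf hM)

namespace LinRDS

variable (S : LinRDS ℙ d)

theorem measurable_Φ (t : ℝ) : Measurable (S.Φ t) :=
  ContinuousLinearMap.measurable_of_measurable_apply fun x =>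
    (S.Φ_meas x).comp measurable_prodMk_left

theorem ringInverse_Φ (t : ℝ) (ω : Ω) : Ring.inverse (S.Φ t ω) = S.Φ (-t) (S.θ t ω) := by
  have hinv : S.Φ (-t) (S.θ t ω) * S.Φ t ω = 1 := by
    rw [← S.Φ_cocycle, neg_add_cancel, S.Φ_zero]
  obtain ⟨u, hu⟩ := S.Φ_isUnit t ω
  rw [← hu, Ring.inverse_unit]
  exact Units.inv_eq_of_mul_eq_one_left (hu ▸ hinv)

theorem measurable_ringInverse_Φ (t : ℝ) : Measurable fun ω => Ring.inverse (S.Φ t ω) := by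
  simp_rw [S.ringInverse_Φ]
  exact (S.measurable_Φ (-t)).comp (S.θ_pres t).measurable

theorem exists_isED_ae_eq_one_of_top_notMem_spectrum (h : ⊤ ∉ S.spectrum) :
    ∃ g P, S.IsED g P ∧ ∀ᵐ ω ∂ℙ, P ω = 1 := by
  rcases not_not.mp h with ⟨g, hg, -⟩ | ⟨-, hED⟩ | ⟨hbot, -⟩
  · exact absurd hg (EReal.coe_ne_top g).symm
  · exact hED
  · exact absurd hbot top_ne_bot

theorem exists_isED_ae_eq_zero_of_bot_notMem_spectrum (h : ⊥ ∉ S.spectrum) :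
    ∃ g P, S.IsED g P ∧ ∀ᵐ ω ∂ℙ, P ω = 0 := by
  rcases not_not.mp h with ⟨g, hg, -⟩ | ⟨htop, -⟩ | ⟨-, hED⟩
  · exact absurd hg (EReal.coe_ne_bot g).symm
  · exact absurd htop bot_ne_top
  · exact hED

variable {S}

theorem IsED.norm_Φ_le_of_ae_eq_one {g : ℝ} {P : Ω → EuclideanSpace ℝ (Fin d) →L[ℝ] _}
    (hED : S.IsED g P) (hP : ∀ᵐ ω ∂ℙ, P ω = 1) :
    ∃ M, ∀ t ∈ Icc (0 : ℝ) 1, ∀ᵐ ω ∂ℙ, ‖S.Φ t ω‖ ≤ M := by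
  obtain ⟨-, a, -, K, hK, hbound⟩ := hED
  refine ⟨K * Real.exp |g - a|, fun t ht => ?_⟩
  filter_upwards [hbound, hP] with ω hω hPω
  calc ‖S.Φ t ω‖ = ‖S.Φ t ω * P ω‖ := by rw [hPω, mul_one]
    _ ≤ K * Real.exp ((g - a) * t) := hω.1 t ht.1
    _ ≤ K * Real.exp |g - a| := by
      gcongr
      exact mul_le_abs_of_abs_le_one (abs_le.mpr ⟨by linarith [ht.1], ht.2⟩)

theorem IsED.norm_Φ_le_of_ae_eq_zero {g : ℝ} {P : Ω → EuclideanSpace ℝ (Fin d) →L[ℝ] _}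
    (hED : S.IsED g P) (hP : ∀ᵐ ω ∂ℙ, P ω = 0) :
    ∃ M, ∀ t ∈ Icc (-1 : ℝ) 0, ∀ᵐ ω ∂ℙ, ‖S.Φ t ω‖ ≤ M := by
  obtain ⟨-, a, -, K, hK, hbound⟩ := hED
  refine ⟨K * Real.exp |g + a|, fun t ht => ?_⟩
  filter_upwards [hbound, hP] with ω hω hPω
  calc ‖S.Φ t ω‖ = ‖S.Φ t ω * (1 - P ω)‖ := by rw [hPω, sub_zero, mul_one]
    _ ≤ K * Real.exp ((g + a) * t) := hω.2 t ht.2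
    _ ≤ K * Real.exp |g + a| := by
      gcongr
      exact mul_le_abs_of_abs_le_one (abs_le.mpr ⟨ht.1, by linarith [ht.2]⟩)

theorem norm_ringInverse_Φ_le {M : ℝ} (hM : ∀ t ∈ Icc (-1 : ℝ) 0, ∀ᵐ ω ∂ℙ, ‖S.Φ t ω‖ ≤ M)
    {t : ℝ} (ht : t ∈ Icc (0 : ℝ) 1) : ∀ᵐ ω ∂ℙ, ‖Ring.inverse (S.Φ t ω)‖ ≤ M := by
  simp_rw [S.ringInverse_Φ]
  exact (S.θ_pres t).quasiMeasurePreserving.ae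
    (hM (-t) ⟨by linarith [ht.2], by linarith [ht.1]⟩)

end LinRDS

theorem integrability_of_bounded_spectrum_general
    {Ω : Type*} [MeasurableSpace Ω] {ℙ : Measure Ω} [IsProbabilityMeasure ℙ] {d : ℕ}
    (S : LinRDS ℙ d)
    (hcont : ∀ ω, Continuous fun t : ℝ => S.Φ t ω)
    (c₁ c₂ : ℝ)
    (hbdd : ∀ γ ∈ S.spectrum, (c₁ : EReal) ≤ γ ∧ γ ≤ (c₂ : EReal)) :
    Integrable (fun ω => posLog (⨆ t : Set.Icc (0:ℝ) 1, ‖S.Φ t ω‖)) ℙ ∧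
    Integrable (fun ω => posLog (⨆ t : Set.Icc (0:ℝ) 1, ‖Ring.inverse (S.Φ t ω)‖)) ℙ := by
  have : Nonempty (Icc (0 : ℝ) 1) := (nonempty_Icc.mpr zero_le_one).to_subtype
  obtain ⟨_, _, hED₁, hP₁⟩ :=
    S.exists_isED_ae_eq_one_of_top_notMem_spectrum fun h => by simpa using (hbdd ⊤ h).2
  obtain ⟨_, _, hED₀, hP₀⟩ :=
    S.exists_isED_ae_eq_zero_of_bot_notMem_spectrum fun h => by simpa using (hbdd ⊥ h).1
  obtain ⟨M₁, hM₁⟩ := hED₁.norm_Φ_le_of_ae_eq_one hP₁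
  obtain ⟨M₀, hM₀⟩ := hED₀.norm_Φ_le_of_ae_eq_zero hP₀
  constructor
  · exact integrable_posLog_ciSup_of_continuous
      (fun ω => (hcont ω).norm.comp continuous_subtype_val)
      (fun t => (S.measurable_Φ t).norm) (fun _ _ => norm_nonneg _) fun t => hM₁ t t.2
  · exact integrable_posLog_ciSup_of_continuous
      (fun ω => ((hcont ω).ringInverse_of_isUnit (S.Φ_isUnit · ω)).norm.comp
        continuous_subtype_val)
      (fun t => (S.measurable_ringInverse_Φ t).norm) (fun _ _ => norm_nonneg _)
      fun t => S.norm_ringInverse_Φ_le hM₀ t.2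

/-- If the dichotomy spectrum of `(θ, Φ)` is bounded, i.e. contained in
`[c₁, c₂]` for some reals `c₁ ≤ c₂`, then `Φ` satisfies the integrability condition of the
Multiplicative Ergodic Theorem. -/
theorem integrability_of_bounded_spectrum
    {Ω : Type*} [MeasurableSpace Ω] {ℙ : Measure Ω} [IsProbabilityMeasure ℙ] {d : ℕ}
    (S : LinRDS ℙ d)
    (hcont : ∀ ω, Continuous fun t : ℝ => S.Φ t ω)
    (c₁ c₂ : ℝ) (hc : c₁ ≤ c₂)
    (hbdd : ∀ γ ∈ S.spectrum, (c₁ : EReal) ≤ γ ∧ γ ≤ (c₂ : EReal)) :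
    Integrable (fun ω => posLog (⨆ t : Set.Icc (0:ℝ) 1, ‖S.Φ t ω‖)) ℙ ∧
    Integrable (fun ω => posLog (⨆ t : Set.Icc (0:ℝ) 1, ‖Ring.inverse (S.Φ t ω)‖)) ℙ :=
  integrability_of_bounded_spectrum_general S hcont c₁ c₂ hbdd

end
end
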